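/- arXiv:2308.00455 — 6 statements merged into one kernel-verified Lean document; each statement's English description precedes it below -/
import Mathlib

section
/- Let H be the completely additive function with H(p_i) = i for the i-th prime p_i. Then for every n ≥ 1, the minimum of the set {m : H(m) = n} is the n-th prime p_n. -/
open Nat Finset

private lemma pstep (q : ℕ) {a b : ℕ} (hq : Nat.Prime q) (h1 : a < q) (h2 : q ≤ b) :
    a.primeCounting + 1 ≤ b.primeCounting := by
  have e1 : a.primeCounting = Nat.count Nat.Prime (a+1) := rfl
  have e2 : b.primeCounting = Nat.count Nat.Prime (b+1) := rfl
  have h3 : Nat.count Nat.Prime (a+1) ≤ Nat.count Nat.Prime q := Nat.count_monotone _ h1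
  have h4 : Nat.count Nat.Prime (q+1) = Nat.count Nat.Prime q + 1 := by
    rw [Nat.count_succ, if_pos hq]
  have h5 : Nat.count Nat.Prime (q+1) ≤ Nat.count Nat.Prime (b+1) :=
    Nat.count_monotone _ (by omega)
  omega

private lemma sieve (N y : ℕ) (hN : 4 ≤ N) (hy2 : y ≤ 2*N) :
    4^N ≤ (2*N)^(1 + (Nat.sqrt (2*N)).primeCounting +
      ((2*N).primeCounting - y.primeCounting)) * 4^y := by
  set n := 2*N with hn
  set s := Nat.sqrt n with hs
  have hn0 : 0 < n := by omega
  set C := N.centralBinom with hC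
  have hCne : C ≠ 0 := N.centralBinom_ne_zero
  set F := (range (n+1)).filter Nat.Prime with hF
  have hsub : C.factorization.support ⊆ F := by
    intro p hp
    have hpp : p.Prime := Nat.prime_of_mem_primeFactors (by rwa [Nat.support_factorization] at hp)
    have h2 : C.factorization p ≠ 0 := by rwa [Finsupp.mem_support_iff] at hp
    have hple : p ≤ n := by
      have h1 : p ^ C.factorization p ≤ n := Nat.pow_factorization_choose_le hn0
      calc p = p ^ 1 := (pow_one p).symm
        _ ≤ p ^ C.factorization p := Nat.pow_le_pow_right hpp.pos (by omega)
        _ ≤ n := h1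
    simp only [hF, Finset.mem_filter, Finset.mem_range]
    exact ⟨by omega, hpp⟩
  have hfact : C = ∏ p ∈ F, p ^ (C.factorization p) := by
    have h1 : C.factorization.prod (· ^ ·) = ∏ p ∈ F, p ^ (C.factorization p) :=
      Finsupp.prod_of_support_subset _ hsub _ (fun i _ => pow_zero i)
    rw [Nat.factorization_prod_pow_eq_self hCne] at h1
    exact h1
  -- split into three products
  have hsplit : C = (∏ p ∈ F.filter (· ≤ s), p ^ (C.factorization p)) *
      ((∏ p ∈ (F.filter (fun p => ¬ p ≤ s)).filter (· ≤ y), p ^ (C.factorization p)) *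
       (∏ p ∈ (F.filter (fun p => ¬ p ≤ s)).filter (fun p => ¬ p ≤ y), p ^ (C.factorization p))) := by
    rw [Finset.prod_filter_mul_prod_filter_not (F.filter (fun p => ¬ p ≤ s)) (· ≤ y)]
    rw [Finset.prod_filter_mul_prod_filter_not F (· ≤ s)]
    exact hfact
  -- bound 1
  have hb1 : (∏ p ∈ F.filter (· ≤ s), p ^ (C.factorization p)) ≤ n ^ s.primeCounting := by
    calc (∏ p ∈ F.filter (· ≤ s), p ^ (C.factorization p))
        ≤ ∏ _p ∈ F.filter (· ≤ s), n :=
          Finset.prod_le_prod' (fun p _ => Nat.pow_factorization_choose_le hn0)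
      _ = n ^ (F.filter (· ≤ s)).card := by rw [Finset.prod_const]
      _ ≤ n ^ s.primeCounting := by
          apply Nat.pow_le_pow_right hn0
          have : F.filter (· ≤ s) ⊆ (range (s+1)).filter Nat.Prime := by
            intro p hp
            simp only [hF, Finset.mem_filter, Finset.mem_range] at hp ⊢
            exact ⟨by omega, hp.1.2⟩
          calc (F.filter (· ≤ s)).card ≤ ((range (s+1)).filter Nat.Prime).card :=
                Finset.card_le_card this
            _ = Nat.count Nat.Prime (s+1) := (Nat.count_eq_card_filter_range _ _).symm
            _ = s.primeCounting := rfl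
  -- bound 2
  have hb2 : (∏ p ∈ (F.filter (fun p => ¬ p ≤ s)).filter (· ≤ y), p ^ (C.factorization p))
      ≤ 4 ^ y := by
    calc (∏ p ∈ (F.filter (fun p => ¬ p ≤ s)).filter (· ≤ y), p ^ (C.factorization p))
        ≤ ∏ p ∈ (F.filter (fun p => ¬ p ≤ s)).filter (· ≤ y), p := by
          apply Finset.prod_le_prod'
          intro p hp
          simp only [Finset.mem_filter, hF, Finset.mem_range] at hp
          have hpp : p.Prime := hp.1.1.2
          have hps : s < p := by omega
          have hv1 : C.factorization p ≤ 1 := by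
            apply Nat.factorization_choose_le_one
            have : ¬ (p * p ≤ n) := by
              intro hcon
              exact absurd (Nat.le_sqrt.2 hcon) (by omega)
            rw [pow_two]; omega
          calc p ^ C.factorization p ≤ p ^ 1 := Nat.pow_le_pow_right hpp.pos hv1
            _ = p := pow_one p
      _ ≤ ∏ p ∈ (range (y+1)).filter Nat.Prime, p := by
          apply Finset.prod_le_prod_of_subset_of_one_le'
          · intro p hp
            simp only [Finset.mem_filter, hF, Finset.mem_range] at hp ⊢
            exact ⟨by omega, hp.1.1.2⟩
          · intro p hp _
            simp only [Finset.mem_filter] at hp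
            exact hp.2.one_lt.le
      _ = primorial y := rfl
      _ ≤ 4 ^ y := primorial_le_4_pow y
  -- bound 3
  have hb3 : (∏ p ∈ (F.filter (fun p => ¬ p ≤ s)).filter (fun p => ¬ p ≤ y), p ^ (C.factorization p))
      ≤ n ^ (n.primeCounting - y.primeCounting) := by
    calc (∏ p ∈ (F.filter (fun p => ¬ p ≤ s)).filter (fun p => ¬ p ≤ y), p ^ (C.factorization p))
        ≤ ∏ _p ∈ (F.filter (fun p => ¬ p ≤ s)).filter (fun p => ¬ p ≤ y), n :=
          Finset.prod_le_prod' (fun p _ => Nat.pow_factorization_choose_le hn0)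
      _ = n ^ ((F.filter (fun p => ¬ p ≤ s)).filter (fun p => ¬ p ≤ y)).card := by
          rw [Finset.prod_const]
      _ ≤ n ^ (n.primeCounting - y.primeCounting) := by
          apply Nat.pow_le_pow_right hn0
          have hsub2 : (F.filter (fun p => ¬ p ≤ s)).filter (fun p => ¬ p ≤ y) ⊆
              F.filter (fun p => ¬ p ≤ y) := by
            intro p hp
            simp only [Finset.mem_filter] at hp ⊢
            exact ⟨hp.1.1, hp.2⟩
          refine le_trans (Finset.card_le_card hsub2) ?_
          have hcards : (F.filter (· ≤ y)).card + (F.filter (fun p => ¬ p ≤ y)).card = F.card :=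
            Finset.card_filter_add_card_filter_not _
          have hFy : (F.filter (· ≤ y)).card = Nat.count Nat.Prime (y+1) := by
            have : F.filter (· ≤ y) = (range (y+1)).filter Nat.Prime := by
              ext p
              simp only [hF, Finset.mem_filter, Finset.mem_range]
              constructor
              · rintro ⟨⟨_, hp⟩, hpy⟩; exact ⟨by omega, hp⟩
              · rintro ⟨hpy, hp⟩; exact ⟨⟨by omega, hp⟩, by omega⟩
            rw [this, Nat.count_eq_card_filter_range]
          have hFcard : F.card = Nat.count Nat.Prime (n+1) := by
            rw [hF, Nat.count_eq_card_filter_range]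
          have e1 : n.primeCounting = Nat.count Nat.Prime (n+1) := rfl
          have e2 : y.primeCounting = Nat.count Nat.Prime (y+1) := rfl
          omega
  -- combine
  have hCbound : C ≤ n ^ (s.primeCounting + (n.primeCounting - y.primeCounting)) * 4 ^ y := by
    rw [hsplit, pow_add]
    calc _ ≤ (n ^ s.primeCounting) * ((4^y) * (n ^ (n.primeCounting - y.primeCounting))) :=
      Nat.mul_le_mul hb1 (Nat.mul_le_mul hb2 hb3)
    _ = n ^ s.primeCounting * n ^ (n.primeCounting - y.primeCounting) * 4 ^ y := by ring
  have h4 : 4^N ≤ n * C := (Nat.four_pow_lt_mul_centralBinom N hN).le.trans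
    (Nat.mul_le_mul_right _ (by omega))
  calc 4^N ≤ n * C := h4
    _ ≤ n * (n ^ (s.primeCounting + (n.primeCounting - y.primeCounting)) * 4 ^ y) :=
        Nat.mul_le_mul_left _ hCbound
    _ = n ^ (1 + s.primeCounting + (n.primeCounting - y.primeCounting)) * 4 ^ y := by
        simp [pow_add]; ring

private lemma twostep3 : ∀ a : ℕ, 7*(16+2*a)+7 ≤ 2^(7+a) := by
  intro a
  induction a with
  | zero => norm_num
  | succ b ih =>
    have h2 : (128:ℕ) ≤ 2^(7+b) := by
      calc (128:ℕ) = 2^7 := by norm_num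
        _ ≤ 2^(7+b) := Nat.pow_le_pow_right (by norm_num) (by omega)
    have : 2^(7+(b+1)) = 2 * 2^(7+b) := by ring
    omega

private lemma twostep5 : ∀ a : ℕ, 35*(14+2*a)+21 ≤ 9*2^(6+a) := by
  intro a
  induction a with
  | zero => norm_num
  | succ b ih =>
    have h2 : (64:ℕ) ≤ 2^(6+b) := by
      calc (64:ℕ) = 2^6 := by norm_num
        _ ≤ 2^(6+b) := Nat.pow_le_pow_right (by norm_num) (by omega)
    have : 2^(6+(b+1)) = 2 * 2^(6+b) := by ring
    omega

private lemma sqrt_lb (m : ℕ) (c : ℕ) (hm : 2^(2*c) ≤ m) : 2^c ≤ Nat.sqrt m := by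
  rw [Nat.le_sqrt]
  calc 2^c * 2^c = 2^(2*c) := by rw [← pow_add]; ring_nf
    _ ≤ m := hm

private lemma h3d (m : ℕ) (hm : 16384 ≤ m) : 7 * Nat.size m + 7 ≤ Nat.sqrt m := by
  set L := Nat.size m with hL
  have hL15 : 15 ≤ L := by
    have : Nat.size 16384 ≤ L := Nat.size_le_size hm
    have e : Nat.size 16384 = 15 := by
      have : (16384:ℕ) = 2^14 := by norm_num
      rw [this, Nat.size_pow]
    omega
  have hpow : 2^(L-1) ≤ m := Nat.lt_size.1 (by omega)
  set a := (L-1)/2 - 7 with ha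
  have h7a : 7 + a = (L-1)/2 := by omega
  have hsq : 2^((L-1)/2) ≤ Nat.sqrt m := by
    apply sqrt_lb
    calc 2^(2*((L-1)/2)) ≤ 2^(L-1) := Nat.pow_le_pow_right (by norm_num) (by omega)
      _ ≤ m := hpow
  have := twostep3 a
  rw [h7a] at this
  have hL16 : L ≤ 16 + 2*a := by omega
  omega

private lemma h5d (m : ℕ) (hm : 4096 ≤ m) : 35 * Nat.size m + 21 ≤ 9 * Nat.sqrt m := by
  set L := Nat.size m with hL
  have hL13 : 13 ≤ L := by
    have : Nat.size 4096 ≤ L := Nat.size_le_size hm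
    have e : Nat.size 4096 = 13 := by
      have : (4096:ℕ) = 2^12 := by norm_num
      rw [this, Nat.size_pow]
    omega
  have hpow : 2^(L-1) ≤ m := Nat.lt_size.1 (by omega)
  set a := (L-1)/2 - 6 with ha
  have h6a : 6 + a = (L-1)/2 := by omega
  have hsq : 2^((L-1)/2) ≤ Nat.sqrt m := by
    apply sqrt_lb
    calc 2^(2*((L-1)/2)) ≤ 2^(L-1) := Nat.pow_le_pow_right (by norm_num) (by omega)
      _ ≤ m := hpow
  have := twostep5 a
  rw [h6a] at this
  have hL14 : L ≤ 14 + 2*a := by omega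
  omega

-- algebraic core
private lemma algcore (x u L s m : ℕ) (hu : x = u + 2) (hxs : x ≤ s + 1) (hs9 : 9 ≤ s)
    (hsm : s * s ≤ m) (hr : 7*x*L + 21 ≤ 3*u*s) :
    x*(L*(s+x+2)) + x + 2 ≤ u * m := by
  have c1 : 3*(s+x+2) ≤ 7*s := by omega
  have c2 : 3*(x*(L*(s+x+2))) ≤ x*L*(7*s) := by
    calc 3*(x*(L*(s+x+2))) = (x*L)*(3*(s+x+2)) := by ring
      _ ≤ (x*L)*(7*s) := Nat.mul_le_mul_left _ c1
      _ = x*L*(7*s) := rfl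
  have c3 : x*L*(7*s) = (7*x*L)*s := by ring
  have c4 : (7*x*L)*s + 21*s ≤ (3*u*s)*s := by
    calc (7*x*L)*s + 21*s = (7*x*L + 21)*s := by ring
      _ ≤ (3*u*s)*s := Nat.mul_le_mul_right _ hr
  have c5 : (3*u*s)*s = 3*(u*(s*s)) := by ring
  have c6 : u*(s*s) ≤ u*m := Nat.mul_le_mul_left _ hsm
  have c7 : 3*x + 6 ≤ 21*s := by omega
  have : 3*(x*(L*(s+x+2)) + x + 2) ≤ 3*(u*m) := by
    calc 3*(x*(L*(s+x+2)) + x + 2) = 3*(x*(L*(s+x+2))) + (3*x + 6) := by ring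
      _ ≤ x*L*(7*s) + 21*s := by omega
      _ = (7*x*L)*s + 21*s := by rw [c3]
      _ ≤ (3*u*s)*s := c4
      _ = 3*(u*(s*s)) := c5
      _ ≤ 3*(u*m) := by omega
  omega
private lemma analytic {x y : ℕ} (h3 : 3 ≤ x) (hxy : x ≤ y) (hodd : Odd (x*y))
    (hratio : 7*x*(Nat.size (x*y-1)) + 21 ≤ 3*(x-2)*(Nat.sqrt (x*y-1)))
    (hs9 : 9 ≤ Nat.sqrt (x*y-1)) :
    x.primeCounting + y.primeCounting ≤ (x*y).primeCounting := by
  set m := x*y - 1 with hmdef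
  set s := Nat.sqrt m with hsdef
  set L := Nat.size m with hLdef
  have hy1 : 1 ≤ y := by omega
  have hxy9 : 9 ≤ x*y := by nlinarith
  have hm1 : x*y = m + 1 := by omega
  have hmodd : ¬ (2 ∣ x*y) := by
    rcases hodd with ⟨t, ht⟩; omega
  have heven : m % 2 = 0 := by omega
  set N := m / 2 with hNdef
  have hm2N : m = 2*N := by omega
  have hsm : s*s ≤ m := Nat.sqrt_le m
  have hm81 : 81 ≤ m := by nlinarith [Nat.sqrt_le' m]
  have hN4 : 4 ≤ N := by omega
  have hyle : y ≤ m := by nlinarith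
  have hxs : x ≤ s + 1 := by
    by_contra hc
    push_neg at hc
    have h1 : m < (s+1)*(s+1) := Nat.lt_succ_sqrt m
    have h2 : (s+2)*(s+2) ≤ x*x := Nat.mul_le_mul (by omega) (by omega)
    have h3 : x*x ≤ x*y := Nat.mul_le_mul_left x hxy
    nlinarith
  have hpix1 : 1 ≤ x.primeCounting := by
    have h2 : Nat.primeCounting 2 = 1 := by decide
    have := Nat.monotone_primeCounting (show 2 ≤ x by omega)
    omega
  by_contra hcon
  push_neg at hcon
  have hmono1 : m.primeCounting ≤ (x*y).primeCounting :=
    Nat.monotone_primeCounting (by omega)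
  have hmono2 : y.primeCounting ≤ m.primeCounting :=
    Nat.monotone_primeCounting hyle
  have hk : m.primeCounting - y.primeCounting ≤ x.primeCounting - 1 := by omega
  -- counting bounds
  have hpis : s.primeCounting ≤ s + 1 := by
    have e : s.primeCounting = Nat.count Nat.Prime (s+1) := rfl
    rw [e]; exact Nat.count_le _
  have hpix : x.primeCounting ≤ x + 1 := by
    have e : x.primeCounting = Nat.count Nat.Prime (x+1) := rfl
    rw [e]; exact Nat.count_le _
  set E := 1 + s.primeCounting + (m.primeCounting - y.primeCounting) with hEdef
  have hE : E ≤ s + x + 2 := by omega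
  -- numeric bound
  have halg : x*(L*(s+x+2)) + x + 2 ≤ (x-2) * m :=
    algcore x (x-2) L s m (by omega) hxs hs9 hsm hratio
  have hnum : L*(s+x+2) + 2*y + 1 ≤ m := by
    have hxpos : 0 < x := by omega
    have key : x*(L*(s+x+2) + 2*y + 1) ≤ x*m := by
      have e1 : x*(L*(s+x+2) + 2*y + 1) = x*(L*(s+x+2)) + 2*(x*y) + x := by ring
      have e2 : (x-2)*m + 2*m = x*m := by
        have : x - 2 + 2 = x := by omega
        calc (x-2)*m + 2*m = ((x-2)+2)*m := by ring
          _ = x*m := by rw [this]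
      omega
    exact Nat.le_of_mul_le_mul_left key hxpos
  -- contradiction chain
  have hsieve := sieve N y hN4 (by omega)
  rw [← hm2N] at hsieve
  have hmpow : m < 2^L := Nat.size_le.1 le_rfl
  have chain : (4:ℕ)^N ≤ 2^(L*E + 2*y) := by
    calc (4:ℕ)^N ≤ m^E * 4^y := hsieve
      _ ≤ (2^L)^E * 4^y := Nat.mul_le_mul_right _ (Nat.pow_le_pow_left hmpow.le E)
      _ = 2^(L*E) * 2^(2*y) := by
          have e1 : ((2:ℕ)^L)^E = 2^(L*E) := (pow_mul 2 L E).symm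
          have e2 : (4:ℕ)^y = 2^(2*y) := by
            have : (4:ℕ) = 2^2 := by norm_num
            rw [this, ← pow_mul]
          rw [e1, e2]
      _ = 2^(L*E + 2*y) := by rw [← pow_add]
  have hlt : L*E + 2*y < m := by
    have : L*E ≤ L*(s+x+2) := Nat.mul_le_mul_left _ hE
    omega
  have hfin : (2:ℕ)^(L*E+2*y) < 2^m := Nat.pow_lt_pow_right (by norm_num) hlt
  have h4N : (4:ℕ)^N = 2^m := by
    rw [hm2N, pow_mul]
    norm_num
  omega
lemma fin_3 (y : ℕ) (h1 : 3 ≤ y) (h2 : y ≤ 5461) :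
    Nat.primeCounting 3 + Nat.primeCounting y ≤ Nat.primeCounting (3*y) := by
  have hx : Nat.primeCounting 3 = 2 := by decide
  rw [hx]
  rcases le_or_gt y 4 with hy0 | hy0
  · have w0 : Nat.primeCounting y + 1 ≤ Nat.primeCounting 5 :=
      pstep 5 (by norm_num) (by omega) (by omega)
    have w1 : Nat.primeCounting 5 + 1 ≤ Nat.primeCounting (3*y) :=
      pstep 7 (by norm_num) (by omega) (by omega)
    omega
  rcases le_or_gt y 10 with hy1 | hy1
  · have w0 : Nat.primeCounting y + 1 ≤ Nat.primeCounting 11 :=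
      pstep 11 (by norm_num) (by omega) (by omega)
    have w1 : Nat.primeCounting 11 + 1 ≤ Nat.primeCounting (3*y) :=
      pstep 13 (by norm_num) (by omega) (by omega)
    omega
  rcases le_or_gt y 28 with hy2 | hy2
  · have w0 : Nat.primeCounting y + 1 ≤ Nat.primeCounting 29 :=
      pstep 29 (by norm_num) (by omega) (by omega)
    have w1 : Nat.primeCounting 29 + 1 ≤ Nat.primeCounting (3*y) :=
      pstep 31 (by norm_num) (by omega) (by omega)
    omega
  rcases le_or_gt y 78 with hy3 | hy3
  · have w0 : Nat.primeCounting y + 1 ≤ Nat.primeCounting 79 :=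
      pstep 79 (by norm_num) (by omega) (by omega)
    have w1 : Nat.primeCounting 79 + 1 ≤ Nat.primeCounting (3*y) :=
      pstep 83 (by norm_num) (by omega) (by omega)
    omega
  rcases le_or_gt y 228 with hy4 | hy4
  · have w0 : Nat.primeCounting y + 1 ≤ Nat.primeCounting 229 :=
      pstep 229 (by norm_num) (by omega) (by omega)
    have w1 : Nat.primeCounting 229 + 1 ≤ Nat.primeCounting (3*y) :=
      pstep 233 (by norm_num) (by omega) (by omega)
    omega
  rcases le_or_gt y 676 with hy5 | hy5
  · have w0 : Nat.primeCounting y + 1 ≤ Nat.primeCounting 677 :=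
      pstep 677 (by norm_num) (by omega) (by omega)
    have w1 : Nat.primeCounting 677 + 1 ≤ Nat.primeCounting (3*y) :=
      pstep 683 (by norm_num) (by omega) (by omega)
    omega
  rcases le_or_gt y 2026 with hy6 | hy6
  · have w0 : Nat.primeCounting y + 1 ≤ Nat.primeCounting 2027 :=
      pstep 2027 (by norm_num) (by omega) (by omega)
    have w1 : Nat.primeCounting 2027 + 1 ≤ Nat.primeCounting (3*y) :=
      pstep 2029 (by norm_num) (by omega) (by omega)
    omega
  have w0 : Nat.primeCounting y + 1 ≤ Nat.primeCounting 6073 :=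
    pstep 6073 (by norm_num) (by omega) (by omega)
  have w1 : Nat.primeCounting 6073 + 1 ≤ Nat.primeCounting (3*y) :=
    pstep 6079 (by norm_num) (by omega) (by omega)
  omega

lemma fin_5 (y : ℕ) (h1 : 5 ≤ y) (h2 : y ≤ 819) :
    Nat.primeCounting 5 + Nat.primeCounting y ≤ Nat.primeCounting (5*y) := by
  have hx : Nat.primeCounting 5 = 3 := by decide
  rw [hx]
  rcases le_or_gt y 16 with hy0 | hy0
  · have w0 : Nat.primeCounting y + 1 ≤ Nat.primeCounting 17 :=
      pstep 17 (by norm_num) (by omega) (by omega)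
    have w1 : Nat.primeCounting 17 + 1 ≤ Nat.primeCounting 19 :=
      pstep 19 (by norm_num) (by omega) (by omega)
    have w2 : Nat.primeCounting 19 + 1 ≤ Nat.primeCounting (5*y) :=
      pstep 23 (by norm_num) (by omega) (by omega)
    omega
  rcases le_or_gt y 72 with hy1 | hy1
  · have w0 : Nat.primeCounting y + 1 ≤ Nat.primeCounting 73 :=
      pstep 73 (by norm_num) (by omega) (by omega)
    have w1 : Nat.primeCounting 73 + 1 ≤ Nat.primeCounting 79 :=
      pstep 79 (by norm_num) (by omega) (by omega)
    have w2 : Nat.primeCounting 79 + 1 ≤ Nat.primeCounting (5*y) :=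
      pstep 83 (by norm_num) (by omega) (by omega)
    omega
  rcases le_or_gt y 348 with hy2 | hy2
  · have w0 : Nat.primeCounting y + 1 ≤ Nat.primeCounting 349 :=
      pstep 349 (by norm_num) (by omega) (by omega)
    have w1 : Nat.primeCounting 349 + 1 ≤ Nat.primeCounting 353 :=
      pstep 353 (by norm_num) (by omega) (by omega)
    have w2 : Nat.primeCounting 353 + 1 ≤ Nat.primeCounting (5*y) :=
      pstep 359 (by norm_num) (by omega) (by omega)
    omega
  have w0 : Nat.primeCounting y + 1 ≤ Nat.primeCounting 1723 :=
    pstep 1723 (by norm_num) (by omega) (by omega)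
  have w1 : Nat.primeCounting 1723 + 1 ≤ Nat.primeCounting 1733 :=
    pstep 1733 (by norm_num) (by omega) (by omega)
  have w2 : Nat.primeCounting 1733 + 1 ≤ Nat.primeCounting (5*y) :=
    pstep 1741 (by norm_num) (by omega) (by omega)
  omega

lemma fin_7 (y : ℕ) (h1 : 7 ≤ y) (h2 : y ≤ 585) :
    Nat.primeCounting 7 + Nat.primeCounting y ≤ Nat.primeCounting (7*y) := by
  have hx : Nat.primeCounting 7 = 4 := by decide
  rw [hx]
  rcases le_or_gt y 36 with hy0 | hy0
  · have w0 : Nat.primeCounting y + 1 ≤ Nat.primeCounting 37 :=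
      pstep 37 (by norm_num) (by omega) (by omega)
    have w1 : Nat.primeCounting 37 + 1 ≤ Nat.primeCounting 41 :=
      pstep 41 (by norm_num) (by omega) (by omega)
    have w2 : Nat.primeCounting 41 + 1 ≤ Nat.primeCounting 43 :=
      pstep 43 (by norm_num) (by omega) (by omega)
    have w3 : Nat.primeCounting 43 + 1 ≤ Nat.primeCounting (7*y) :=
      pstep 47 (by norm_num) (by omega) (by omega)
    omega
  rcases le_or_gt y 238 with hy1 | hy1
  · have w0 : Nat.primeCounting y + 1 ≤ Nat.primeCounting 239 :=
      pstep 239 (by norm_num) (by omega) (by omega)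
    have w1 : Nat.primeCounting 239 + 1 ≤ Nat.primeCounting 241 :=
      pstep 241 (by norm_num) (by omega) (by omega)
    have w2 : Nat.primeCounting 241 + 1 ≤ Nat.primeCounting 251 :=
      pstep 251 (by norm_num) (by omega) (by omega)
    have w3 : Nat.primeCounting 251 + 1 ≤ Nat.primeCounting (7*y) :=
      pstep 257 (by norm_num) (by omega) (by omega)
    omega
  have w0 : Nat.primeCounting y + 1 ≤ Nat.primeCounting 1657 :=
    pstep 1657 (by norm_num) (by omega) (by omega)
  have w1 : Nat.primeCounting 1657 + 1 ≤ Nat.primeCounting 1663 :=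
    pstep 1663 (by norm_num) (by omega) (by omega)
  have w2 : Nat.primeCounting 1663 + 1 ≤ Nat.primeCounting 1667 :=
    pstep 1667 (by norm_num) (by omega) (by omega)
  have w3 : Nat.primeCounting 1667 + 1 ≤ Nat.primeCounting (7*y) :=
    pstep 1669 (by norm_num) (by omega) (by omega)
  omega

lemma fin_11 (y : ℕ) (h1 : 11 ≤ y) (h2 : y ≤ 372) :
    Nat.primeCounting 11 + Nat.primeCounting y ≤ Nat.primeCounting (11*y) := by
  have hx : Nat.primeCounting 11 = 5 := by decide
  rw [hx]
  rcases le_or_gt y 100 with hy0 | hy0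
  · have w0 : Nat.primeCounting y + 1 ≤ Nat.primeCounting 101 :=
      pstep 101 (by norm_num) (by omega) (by omega)
    have w1 : Nat.primeCounting 101 + 1 ≤ Nat.primeCounting 103 :=
      pstep 103 (by norm_num) (by omega) (by omega)
    have w2 : Nat.primeCounting 103 + 1 ≤ Nat.primeCounting 107 :=
      pstep 107 (by norm_num) (by omega) (by omega)
    have w3 : Nat.primeCounting 107 + 1 ≤ Nat.primeCounting 109 :=
      pstep 109 (by norm_num) (by omega) (by omega)
    have w4 : Nat.primeCounting 109 + 1 ≤ Nat.primeCounting (11*y) :=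
      pstep 113 (by norm_num) (by omega) (by omega)
    omega
  have w0 : Nat.primeCounting y + 1 ≤ Nat.primeCounting 1091 :=
    pstep 1091 (by norm_num) (by omega) (by omega)
  have w1 : Nat.primeCounting 1091 + 1 ≤ Nat.primeCounting 1093 :=
    pstep 1093 (by norm_num) (by omega) (by omega)
  have w2 : Nat.primeCounting 1093 + 1 ≤ Nat.primeCounting 1097 :=
    pstep 1097 (by norm_num) (by omega) (by omega)
  have w3 : Nat.primeCounting 1097 + 1 ≤ Nat.primeCounting 1103 :=
    pstep 1103 (by norm_num) (by omega) (by omega)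
  have w4 : Nat.primeCounting 1103 + 1 ≤ Nat.primeCounting (11*y) :=
    pstep 1109 (by norm_num) (by omega) (by omega)
  omega

lemma fin_13 (y : ℕ) (h1 : 13 ≤ y) (h2 : y ≤ 315) :
    Nat.primeCounting 13 + Nat.primeCounting y ≤ Nat.primeCounting (13*y) := by
  have hx : Nat.primeCounting 13 = 6 := by decide
  rw [hx]
  rcases le_or_gt y 138 with hy0 | hy0
  · have w0 : Nat.primeCounting y + 1 ≤ Nat.primeCounting 139 :=
      pstep 139 (by norm_num) (by omega) (by omega)
    have w1 : Nat.primeCounting 139 + 1 ≤ Nat.primeCounting 149 :=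
      pstep 149 (by norm_num) (by omega) (by omega)
    have w2 : Nat.primeCounting 149 + 1 ≤ Nat.primeCounting 151 :=
      pstep 151 (by norm_num) (by omega) (by omega)
    have w3 : Nat.primeCounting 151 + 1 ≤ Nat.primeCounting 157 :=
      pstep 157 (by norm_num) (by omega) (by omega)
    have w4 : Nat.primeCounting 157 + 1 ≤ Nat.primeCounting 163 :=
      pstep 163 (by norm_num) (by omega) (by omega)
    have w5 : Nat.primeCounting 163 + 1 ≤ Nat.primeCounting (13*y) :=
      pstep 167 (by norm_num) (by omega) (by omega)
    omega
  have w0 : Nat.primeCounting y + 1 ≤ Nat.primeCounting 1759 :=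
    pstep 1759 (by norm_num) (by omega) (by omega)
  have w1 : Nat.primeCounting 1759 + 1 ≤ Nat.primeCounting 1777 :=
    pstep 1777 (by norm_num) (by omega) (by omega)
  have w2 : Nat.primeCounting 1777 + 1 ≤ Nat.primeCounting 1783 :=
    pstep 1783 (by norm_num) (by omega) (by omega)
  have w3 : Nat.primeCounting 1783 + 1 ≤ Nat.primeCounting 1787 :=
    pstep 1787 (by norm_num) (by omega) (by omega)
  have w4 : Nat.primeCounting 1787 + 1 ≤ Nat.primeCounting 1789 :=
    pstep 1789 (by norm_num) (by omega) (by omega)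
  have w5 : Nat.primeCounting 1789 + 1 ≤ Nat.primeCounting (13*y) :=
    pstep 1801 (by norm_num) (by omega) (by omega)
  omega

lemma fin_17 (y : ℕ) (h1 : 17 ≤ y) (h2 : y ≤ 240) :
    Nat.primeCounting 17 + Nat.primeCounting y ≤ Nat.primeCounting (17*y) := by
  have hx : Nat.primeCounting 17 = 7 := by decide
  rw [hx]
  have w0 : Nat.primeCounting y + 1 ≤ Nat.primeCounting 257 :=
    pstep 257 (by norm_num) (by omega) (by omega)
  have w1 : Nat.primeCounting 257 + 1 ≤ Nat.primeCounting 263 :=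
    pstep 263 (by norm_num) (by omega) (by omega)
  have w2 : Nat.primeCounting 263 + 1 ≤ Nat.primeCounting 269 :=
    pstep 269 (by norm_num) (by omega) (by omega)
  have w3 : Nat.primeCounting 269 + 1 ≤ Nat.primeCounting 271 :=
    pstep 271 (by norm_num) (by omega) (by omega)
  have w4 : Nat.primeCounting 271 + 1 ≤ Nat.primeCounting 277 :=
    pstep 277 (by norm_num) (by omega) (by omega)
  have w5 : Nat.primeCounting 277 + 1 ≤ Nat.primeCounting 281 :=
    pstep 281 (by norm_num) (by omega) (by omega)
  have w6 : Nat.primeCounting 281 + 1 ≤ Nat.primeCounting (17*y) :=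
    pstep 283 (by norm_num) (by omega) (by omega)
  omega

lemma fin_19 (y : ℕ) (h1 : 19 ≤ y) (h2 : y ≤ 215) :
    Nat.primeCounting 19 + Nat.primeCounting y ≤ Nat.primeCounting (19*y) := by
  have hx : Nat.primeCounting 19 = 8 := by decide
  rw [hx]
  have w0 : Nat.primeCounting y + 1 ≤ Nat.primeCounting 313 :=
    pstep 313 (by norm_num) (by omega) (by omega)
  have w1 : Nat.primeCounting 313 + 1 ≤ Nat.primeCounting 317 :=
    pstep 317 (by norm_num) (by omega) (by omega)
  have w2 : Nat.primeCounting 317 + 1 ≤ Nat.primeCounting 331 :=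
    pstep 331 (by norm_num) (by omega) (by omega)
  have w3 : Nat.primeCounting 331 + 1 ≤ Nat.primeCounting 337 :=
    pstep 337 (by norm_num) (by omega) (by omega)
  have w4 : Nat.primeCounting 337 + 1 ≤ Nat.primeCounting 347 :=
    pstep 347 (by norm_num) (by omega) (by omega)
  have w5 : Nat.primeCounting 347 + 1 ≤ Nat.primeCounting 349 :=
    pstep 349 (by norm_num) (by omega) (by omega)
  have w6 : Nat.primeCounting 349 + 1 ≤ Nat.primeCounting 353 :=
    pstep 353 (by norm_num) (by omega) (by omega)
  have w7 : Nat.primeCounting 353 + 1 ≤ Nat.primeCounting (19*y) :=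
    pstep 359 (by norm_num) (by omega) (by omega)
  omega

lemma fin_23 (y : ℕ) (h1 : 23 ≤ y) (h2 : y ≤ 178) :
    Nat.primeCounting 23 + Nat.primeCounting y ≤ Nat.primeCounting (23*y) := by
  have hx : Nat.primeCounting 23 = 9 := by decide
  rw [hx]
  have w0 : Nat.primeCounting y + 1 ≤ Nat.primeCounting 467 :=
    pstep 467 (by norm_num) (by omega) (by omega)
  have w1 : Nat.primeCounting 467 + 1 ≤ Nat.primeCounting 479 :=
    pstep 479 (by norm_num) (by omega) (by omega)
  have w2 : Nat.primeCounting 479 + 1 ≤ Nat.primeCounting 487 :=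
    pstep 487 (by norm_num) (by omega) (by omega)
  have w3 : Nat.primeCounting 487 + 1 ≤ Nat.primeCounting 491 :=
    pstep 491 (by norm_num) (by omega) (by omega)
  have w4 : Nat.primeCounting 491 + 1 ≤ Nat.primeCounting 499 :=
    pstep 499 (by norm_num) (by omega) (by omega)
  have w5 : Nat.primeCounting 499 + 1 ≤ Nat.primeCounting 503 :=
    pstep 503 (by norm_num) (by omega) (by omega)
  have w6 : Nat.primeCounting 503 + 1 ≤ Nat.primeCounting 509 :=
    pstep 509 (by norm_num) (by omega) (by omega)
  have w7 : Nat.primeCounting 509 + 1 ≤ Nat.primeCounting 521 :=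
    pstep 521 (by norm_num) (by omega) (by omega)
  have w8 : Nat.primeCounting 521 + 1 ≤ Nat.primeCounting (23*y) :=
    pstep 523 (by norm_num) (by omega) (by omega)
  omega

lemma fin_29 (y : ℕ) (h1 : 29 ≤ y) (h2 : y ≤ 141) :
    Nat.primeCounting 29 + Nat.primeCounting y ≤ Nat.primeCounting (29*y) := by
  have hx : Nat.primeCounting 29 = 10 := by decide
  rw [hx]
  have w0 : Nat.primeCounting y + 1 ≤ Nat.primeCounting 773 :=
    pstep 773 (by norm_num) (by omega) (by omega)
  have w1 : Nat.primeCounting 773 + 1 ≤ Nat.primeCounting 787 :=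
    pstep 787 (by norm_num) (by omega) (by omega)
  have w2 : Nat.primeCounting 787 + 1 ≤ Nat.primeCounting 797 :=
    pstep 797 (by norm_num) (by omega) (by omega)
  have w3 : Nat.primeCounting 797 + 1 ≤ Nat.primeCounting 809 :=
    pstep 809 (by norm_num) (by omega) (by omega)
  have w4 : Nat.primeCounting 809 + 1 ≤ Nat.primeCounting 811 :=
    pstep 811 (by norm_num) (by omega) (by omega)
  have w5 : Nat.primeCounting 811 + 1 ≤ Nat.primeCounting 821 :=
    pstep 821 (by norm_num) (by omega) (by omega)
  have w6 : Nat.primeCounting 821 + 1 ≤ Nat.primeCounting 823 :=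
    pstep 823 (by norm_num) (by omega) (by omega)
  have w7 : Nat.primeCounting 823 + 1 ≤ Nat.primeCounting 827 :=
    pstep 827 (by norm_num) (by omega) (by omega)
  have w8 : Nat.primeCounting 827 + 1 ≤ Nat.primeCounting 829 :=
    pstep 829 (by norm_num) (by omega) (by omega)
  have w9 : Nat.primeCounting 829 + 1 ≤ Nat.primeCounting (29*y) :=
    pstep 839 (by norm_num) (by omega) (by omega)
  omega

lemma fin_31 (y : ℕ) (h1 : 31 ≤ y) (h2 : y ≤ 132) :
    Nat.primeCounting 31 + Nat.primeCounting y ≤ Nat.primeCounting (31*y) := by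
  have hx : Nat.primeCounting 31 = 11 := by decide
  rw [hx]
  have w0 : Nat.primeCounting y + 1 ≤ Nat.primeCounting 881 :=
    pstep 881 (by norm_num) (by omega) (by omega)
  have w1 : Nat.primeCounting 881 + 1 ≤ Nat.primeCounting 883 :=
    pstep 883 (by norm_num) (by omega) (by omega)
  have w2 : Nat.primeCounting 883 + 1 ≤ Nat.primeCounting 887 :=
    pstep 887 (by norm_num) (by omega) (by omega)
  have w3 : Nat.primeCounting 887 + 1 ≤ Nat.primeCounting 907 :=
    pstep 907 (by norm_num) (by omega) (by omega)
  have w4 : Nat.primeCounting 907 + 1 ≤ Nat.primeCounting 911 :=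
    pstep 911 (by norm_num) (by omega) (by omega)
  have w5 : Nat.primeCounting 911 + 1 ≤ Nat.primeCounting 919 :=
    pstep 919 (by norm_num) (by omega) (by omega)
  have w6 : Nat.primeCounting 919 + 1 ≤ Nat.primeCounting 929 :=
    pstep 929 (by norm_num) (by omega) (by omega)
  have w7 : Nat.primeCounting 929 + 1 ≤ Nat.primeCounting 937 :=
    pstep 937 (by norm_num) (by omega) (by omega)
  have w8 : Nat.primeCounting 937 + 1 ≤ Nat.primeCounting 941 :=
    pstep 941 (by norm_num) (by omega) (by omega)
  have w9 : Nat.primeCounting 941 + 1 ≤ Nat.primeCounting 947 :=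
    pstep 947 (by norm_num) (by omega) (by omega)
  have w10 : Nat.primeCounting 947 + 1 ≤ Nat.primeCounting (31*y) :=
    pstep 953 (by norm_num) (by omega) (by omega)
  omega

lemma fin_37 (y : ℕ) (h1 : 37 ≤ y) (h2 : y ≤ 110) :
    Nat.primeCounting 37 + Nat.primeCounting y ≤ Nat.primeCounting (37*y) := by
  have hx : Nat.primeCounting 37 = 12 := by decide
  rw [hx]
  have w0 : Nat.primeCounting y + 1 ≤ Nat.primeCounting 1283 :=
    pstep 1283 (by norm_num) (by omega) (by omega)
  have w1 : Nat.primeCounting 1283 + 1 ≤ Nat.primeCounting 1289 :=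
    pstep 1289 (by norm_num) (by omega) (by omega)
  have w2 : Nat.primeCounting 1289 + 1 ≤ Nat.primeCounting 1291 :=
    pstep 1291 (by norm_num) (by omega) (by omega)
  have w3 : Nat.primeCounting 1291 + 1 ≤ Nat.primeCounting 1297 :=
    pstep 1297 (by norm_num) (by omega) (by omega)
  have w4 : Nat.primeCounting 1297 + 1 ≤ Nat.primeCounting 1301 :=
    pstep 1301 (by norm_num) (by omega) (by omega)
  have w5 : Nat.primeCounting 1301 + 1 ≤ Nat.primeCounting 1303 :=
    pstep 1303 (by norm_num) (by omega) (by omega)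
  have w6 : Nat.primeCounting 1303 + 1 ≤ Nat.primeCounting 1307 :=
    pstep 1307 (by norm_num) (by omega) (by omega)
  have w7 : Nat.primeCounting 1307 + 1 ≤ Nat.primeCounting 1319 :=
    pstep 1319 (by norm_num) (by omega) (by omega)
  have w8 : Nat.primeCounting 1319 + 1 ≤ Nat.primeCounting 1321 :=
    pstep 1321 (by norm_num) (by omega) (by omega)
  have w9 : Nat.primeCounting 1321 + 1 ≤ Nat.primeCounting 1327 :=
    pstep 1327 (by norm_num) (by omega) (by omega)
  have w10 : Nat.primeCounting 1327 + 1 ≤ Nat.primeCounting 1361 :=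
    pstep 1361 (by norm_num) (by omega) (by omega)
  have w11 : Nat.primeCounting 1361 + 1 ≤ Nat.primeCounting (37*y) :=
    pstep 1367 (by norm_num) (by omega) (by omega)
  omega

lemma fin_41 (y : ℕ) (h1 : 41 ≤ y) (h2 : y ≤ 99) :
    Nat.primeCounting 41 + Nat.primeCounting y ≤ Nat.primeCounting (41*y) := by
  have hx : Nat.primeCounting 41 = 13 := by decide
  rw [hx]
  have w0 : Nat.primeCounting y + 1 ≤ Nat.primeCounting 1597 :=
    pstep 1597 (by norm_num) (by omega) (by omega)
  have w1 : Nat.primeCounting 1597 + 1 ≤ Nat.primeCounting 1601 :=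
    pstep 1601 (by norm_num) (by omega) (by omega)
  have w2 : Nat.primeCounting 1601 + 1 ≤ Nat.primeCounting 1607 :=
    pstep 1607 (by norm_num) (by omega) (by omega)
  have w3 : Nat.primeCounting 1607 + 1 ≤ Nat.primeCounting 1609 :=
    pstep 1609 (by norm_num) (by omega) (by omega)
  have w4 : Nat.primeCounting 1609 + 1 ≤ Nat.primeCounting 1613 :=
    pstep 1613 (by norm_num) (by omega) (by omega)
  have w5 : Nat.primeCounting 1613 + 1 ≤ Nat.primeCounting 1619 :=
    pstep 1619 (by norm_num) (by omega) (by omega)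
  have w6 : Nat.primeCounting 1619 + 1 ≤ Nat.primeCounting 1621 :=
    pstep 1621 (by norm_num) (by omega) (by omega)
  have w7 : Nat.primeCounting 1621 + 1 ≤ Nat.primeCounting 1627 :=
    pstep 1627 (by norm_num) (by omega) (by omega)
  have w8 : Nat.primeCounting 1627 + 1 ≤ Nat.primeCounting 1637 :=
    pstep 1637 (by norm_num) (by omega) (by omega)
  have w9 : Nat.primeCounting 1637 + 1 ≤ Nat.primeCounting 1657 :=
    pstep 1657 (by norm_num) (by omega) (by omega)
  have w10 : Nat.primeCounting 1657 + 1 ≤ Nat.primeCounting 1663 :=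
    pstep 1663 (by norm_num) (by omega) (by omega)
  have w11 : Nat.primeCounting 1663 + 1 ≤ Nat.primeCounting 1667 :=
    pstep 1667 (by norm_num) (by omega) (by omega)
  have w12 : Nat.primeCounting 1667 + 1 ≤ Nat.primeCounting (41*y) :=
    pstep 1669 (by norm_num) (by omega) (by omega)
  omega

lemma fin_43 (y : ℕ) (h1 : 43 ≤ y) (h2 : y ≤ 95) :
    Nat.primeCounting 43 + Nat.primeCounting y ≤ Nat.primeCounting (43*y) := by
  have hx : Nat.primeCounting 43 = 14 := by decide
  rw [hx]
  have w0 : Nat.primeCounting y + 1 ≤ Nat.primeCounting 1733 :=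
    pstep 1733 (by norm_num) (by omega) (by omega)
  have w1 : Nat.primeCounting 1733 + 1 ≤ Nat.primeCounting 1741 :=
    pstep 1741 (by norm_num) (by omega) (by omega)
  have w2 : Nat.primeCounting 1741 + 1 ≤ Nat.primeCounting 1747 :=
    pstep 1747 (by norm_num) (by omega) (by omega)
  have w3 : Nat.primeCounting 1747 + 1 ≤ Nat.primeCounting 1753 :=
    pstep 1753 (by norm_num) (by omega) (by omega)
  have w4 : Nat.primeCounting 1753 + 1 ≤ Nat.primeCounting 1759 :=
    pstep 1759 (by norm_num) (by omega) (by omega)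
  have w5 : Nat.primeCounting 1759 + 1 ≤ Nat.primeCounting 1777 :=
    pstep 1777 (by norm_num) (by omega) (by omega)
  have w6 : Nat.primeCounting 1777 + 1 ≤ Nat.primeCounting 1783 :=
    pstep 1783 (by norm_num) (by omega) (by omega)
  have w7 : Nat.primeCounting 1783 + 1 ≤ Nat.primeCounting 1787 :=
    pstep 1787 (by norm_num) (by omega) (by omega)
  have w8 : Nat.primeCounting 1787 + 1 ≤ Nat.primeCounting 1789 :=
    pstep 1789 (by norm_num) (by omega) (by omega)
  have w9 : Nat.primeCounting 1789 + 1 ≤ Nat.primeCounting 1801 :=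
    pstep 1801 (by norm_num) (by omega) (by omega)
  have w10 : Nat.primeCounting 1801 + 1 ≤ Nat.primeCounting 1811 :=
    pstep 1811 (by norm_num) (by omega) (by omega)
  have w11 : Nat.primeCounting 1811 + 1 ≤ Nat.primeCounting 1823 :=
    pstep 1823 (by norm_num) (by omega) (by omega)
  have w12 : Nat.primeCounting 1823 + 1 ≤ Nat.primeCounting 1831 :=
    pstep 1831 (by norm_num) (by omega) (by omega)
  have w13 : Nat.primeCounting 1831 + 1 ≤ Nat.primeCounting (43*y) :=
    pstep 1847 (by norm_num) (by omega) (by omega)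
  omega

lemma fin_47 (y : ℕ) (h1 : 47 ≤ y) (h2 : y ≤ 87) :
    Nat.primeCounting 47 + Nat.primeCounting y ≤ Nat.primeCounting (47*y) := by
  have hx : Nat.primeCounting 47 = 15 := by decide
  rw [hx]
  have w0 : Nat.primeCounting y + 1 ≤ Nat.primeCounting 2087 :=
    pstep 2087 (by norm_num) (by omega) (by omega)
  have w1 : Nat.primeCounting 2087 + 1 ≤ Nat.primeCounting 2089 :=
    pstep 2089 (by norm_num) (by omega) (by omega)
  have w2 : Nat.primeCounting 2089 + 1 ≤ Nat.primeCounting 2099 :=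
    pstep 2099 (by norm_num) (by omega) (by omega)
  have w3 : Nat.primeCounting 2099 + 1 ≤ Nat.primeCounting 2111 :=
    pstep 2111 (by norm_num) (by omega) (by omega)
  have w4 : Nat.primeCounting 2111 + 1 ≤ Nat.primeCounting 2113 :=
    pstep 2113 (by norm_num) (by omega) (by omega)
  have w5 : Nat.primeCounting 2113 + 1 ≤ Nat.primeCounting 2129 :=
    pstep 2129 (by norm_num) (by omega) (by omega)
  have w6 : Nat.primeCounting 2129 + 1 ≤ Nat.primeCounting 2131 :=
    pstep 2131 (by norm_num) (by omega) (by omega)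
  have w7 : Nat.primeCounting 2131 + 1 ≤ Nat.primeCounting 2137 :=
    pstep 2137 (by norm_num) (by omega) (by omega)
  have w8 : Nat.primeCounting 2137 + 1 ≤ Nat.primeCounting 2141 :=
    pstep 2141 (by norm_num) (by omega) (by omega)
  have w9 : Nat.primeCounting 2141 + 1 ≤ Nat.primeCounting 2143 :=
    pstep 2143 (by norm_num) (by omega) (by omega)
  have w10 : Nat.primeCounting 2143 + 1 ≤ Nat.primeCounting 2153 :=
    pstep 2153 (by norm_num) (by omega) (by omega)
  have w11 : Nat.primeCounting 2153 + 1 ≤ Nat.primeCounting 2161 :=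
    pstep 2161 (by norm_num) (by omega) (by omega)
  have w12 : Nat.primeCounting 2161 + 1 ≤ Nat.primeCounting 2179 :=
    pstep 2179 (by norm_num) (by omega) (by omega)
  have w13 : Nat.primeCounting 2179 + 1 ≤ Nat.primeCounting 2203 :=
    pstep 2203 (by norm_num) (by omega) (by omega)
  have w14 : Nat.primeCounting 2203 + 1 ≤ Nat.primeCounting (47*y) :=
    pstep 2207 (by norm_num) (by omega) (by omega)
  omega

lemma fin_53 (y : ℕ) (h1 : 53 ≤ y) (h2 : y ≤ 77) :
    Nat.primeCounting 53 + Nat.primeCounting y ≤ Nat.primeCounting (53*y) := by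
  have hx : Nat.primeCounting 53 = 16 := by decide
  rw [hx]
  have w0 : Nat.primeCounting y + 1 ≤ Nat.primeCounting 2707 :=
    pstep 2707 (by norm_num) (by omega) (by omega)
  have w1 : Nat.primeCounting 2707 + 1 ≤ Nat.primeCounting 2711 :=
    pstep 2711 (by norm_num) (by omega) (by omega)
  have w2 : Nat.primeCounting 2711 + 1 ≤ Nat.primeCounting 2713 :=
    pstep 2713 (by norm_num) (by omega) (by omega)
  have w3 : Nat.primeCounting 2713 + 1 ≤ Nat.primeCounting 2719 :=
    pstep 2719 (by norm_num) (by omega) (by omega)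
  have w4 : Nat.primeCounting 2719 + 1 ≤ Nat.primeCounting 2729 :=
    pstep 2729 (by norm_num) (by omega) (by omega)
  have w5 : Nat.primeCounting 2729 + 1 ≤ Nat.primeCounting 2731 :=
    pstep 2731 (by norm_num) (by omega) (by omega)
  have w6 : Nat.primeCounting 2731 + 1 ≤ Nat.primeCounting 2741 :=
    pstep 2741 (by norm_num) (by omega) (by omega)
  have w7 : Nat.primeCounting 2741 + 1 ≤ Nat.primeCounting 2749 :=
    pstep 2749 (by norm_num) (by omega) (by omega)
  have w8 : Nat.primeCounting 2749 + 1 ≤ Nat.primeCounting 2753 :=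
    pstep 2753 (by norm_num) (by omega) (by omega)
  have w9 : Nat.primeCounting 2753 + 1 ≤ Nat.primeCounting 2767 :=
    pstep 2767 (by norm_num) (by omega) (by omega)
  have w10 : Nat.primeCounting 2767 + 1 ≤ Nat.primeCounting 2777 :=
    pstep 2777 (by norm_num) (by omega) (by omega)
  have w11 : Nat.primeCounting 2777 + 1 ≤ Nat.primeCounting 2789 :=
    pstep 2789 (by norm_num) (by omega) (by omega)
  have w12 : Nat.primeCounting 2789 + 1 ≤ Nat.primeCounting 2791 :=
    pstep 2791 (by norm_num) (by omega) (by omega)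
  have w13 : Nat.primeCounting 2791 + 1 ≤ Nat.primeCounting 2797 :=
    pstep 2797 (by norm_num) (by omega) (by omega)
  have w14 : Nat.primeCounting 2797 + 1 ≤ Nat.primeCounting 2801 :=
    pstep 2801 (by norm_num) (by omega) (by omega)
  have w15 : Nat.primeCounting 2801 + 1 ≤ Nat.primeCounting (53*y) :=
    pstep 2803 (by norm_num) (by omega) (by omega)
  omega

lemma fin_59 (y : ℕ) (h1 : 59 ≤ y) (h2 : y ≤ 69) :
    Nat.primeCounting 59 + Nat.primeCounting y ≤ Nat.primeCounting (59*y) := by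
  have hx : Nat.primeCounting 59 = 17 := by decide
  rw [hx]
  have w0 : Nat.primeCounting y + 1 ≤ Nat.primeCounting 3343 :=
    pstep 3343 (by norm_num) (by omega) (by omega)
  have w1 : Nat.primeCounting 3343 + 1 ≤ Nat.primeCounting 3347 :=
    pstep 3347 (by norm_num) (by omega) (by omega)
  have w2 : Nat.primeCounting 3347 + 1 ≤ Nat.primeCounting 3359 :=
    pstep 3359 (by norm_num) (by omega) (by omega)
  have w3 : Nat.primeCounting 3359 + 1 ≤ Nat.primeCounting 3361 :=
    pstep 3361 (by norm_num) (by omega) (by omega)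
  have w4 : Nat.primeCounting 3361 + 1 ≤ Nat.primeCounting 3371 :=
    pstep 3371 (by norm_num) (by omega) (by omega)
  have w5 : Nat.primeCounting 3371 + 1 ≤ Nat.primeCounting 3373 :=
    pstep 3373 (by norm_num) (by omega) (by omega)
  have w6 : Nat.primeCounting 3373 + 1 ≤ Nat.primeCounting 3389 :=
    pstep 3389 (by norm_num) (by omega) (by omega)
  have w7 : Nat.primeCounting 3389 + 1 ≤ Nat.primeCounting 3391 :=
    pstep 3391 (by norm_num) (by omega) (by omega)
  have w8 : Nat.primeCounting 3391 + 1 ≤ Nat.primeCounting 3407 :=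
    pstep 3407 (by norm_num) (by omega) (by omega)
  have w9 : Nat.primeCounting 3407 + 1 ≤ Nat.primeCounting 3413 :=
    pstep 3413 (by norm_num) (by omega) (by omega)
  have w10 : Nat.primeCounting 3413 + 1 ≤ Nat.primeCounting 3433 :=
    pstep 3433 (by norm_num) (by omega) (by omega)
  have w11 : Nat.primeCounting 3433 + 1 ≤ Nat.primeCounting 3449 :=
    pstep 3449 (by norm_num) (by omega) (by omega)
  have w12 : Nat.primeCounting 3449 + 1 ≤ Nat.primeCounting 3457 :=
    pstep 3457 (by norm_num) (by omega) (by omega)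
  have w13 : Nat.primeCounting 3457 + 1 ≤ Nat.primeCounting 3461 :=
    pstep 3461 (by norm_num) (by omega) (by omega)
  have w14 : Nat.primeCounting 3461 + 1 ≤ Nat.primeCounting 3463 :=
    pstep 3463 (by norm_num) (by omega) (by omega)
  have w15 : Nat.primeCounting 3463 + 1 ≤ Nat.primeCounting 3467 :=
    pstep 3467 (by norm_num) (by omega) (by omega)
  have w16 : Nat.primeCounting 3467 + 1 ≤ Nat.primeCounting (59*y) :=
    pstep 3469 (by norm_num) (by omega) (by omega)
  omega

lemma fin_61 (y : ℕ) (h1 : 61 ≤ y) (h2 : y ≤ 67) :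
    Nat.primeCounting 61 + Nat.primeCounting y ≤ Nat.primeCounting (61*y) := by
  have hx : Nat.primeCounting 61 = 18 := by decide
  rw [hx]
  have w0 : Nat.primeCounting y + 1 ≤ Nat.primeCounting 3583 :=
    pstep 3583 (by norm_num) (by omega) (by omega)
  have w1 : Nat.primeCounting 3583 + 1 ≤ Nat.primeCounting 3593 :=
    pstep 3593 (by norm_num) (by omega) (by omega)
  have w2 : Nat.primeCounting 3593 + 1 ≤ Nat.primeCounting 3607 :=
    pstep 3607 (by norm_num) (by omega) (by omega)
  have w3 : Nat.primeCounting 3607 + 1 ≤ Nat.primeCounting 3613 :=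
    pstep 3613 (by norm_num) (by omega) (by omega)
  have w4 : Nat.primeCounting 3613 + 1 ≤ Nat.primeCounting 3617 :=
    pstep 3617 (by norm_num) (by omega) (by omega)
  have w5 : Nat.primeCounting 3617 + 1 ≤ Nat.primeCounting 3623 :=
    pstep 3623 (by norm_num) (by omega) (by omega)
  have w6 : Nat.primeCounting 3623 + 1 ≤ Nat.primeCounting 3631 :=
    pstep 3631 (by norm_num) (by omega) (by omega)
  have w7 : Nat.primeCounting 3631 + 1 ≤ Nat.primeCounting 3637 :=
    pstep 3637 (by norm_num) (by omega) (by omega)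
  have w8 : Nat.primeCounting 3637 + 1 ≤ Nat.primeCounting 3643 :=
    pstep 3643 (by norm_num) (by omega) (by omega)
  have w9 : Nat.primeCounting 3643 + 1 ≤ Nat.primeCounting 3659 :=
    pstep 3659 (by norm_num) (by omega) (by omega)
  have w10 : Nat.primeCounting 3659 + 1 ≤ Nat.primeCounting 3671 :=
    pstep 3671 (by norm_num) (by omega) (by omega)
  have w11 : Nat.primeCounting 3671 + 1 ≤ Nat.primeCounting 3673 :=
    pstep 3673 (by norm_num) (by omega) (by omega)
  have w12 : Nat.primeCounting 3673 + 1 ≤ Nat.primeCounting 3677 :=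
    pstep 3677 (by norm_num) (by omega) (by omega)
  have w13 : Nat.primeCounting 3677 + 1 ≤ Nat.primeCounting 3691 :=
    pstep 3691 (by norm_num) (by omega) (by omega)
  have w14 : Nat.primeCounting 3691 + 1 ≤ Nat.primeCounting 3697 :=
    pstep 3697 (by norm_num) (by omega) (by omega)
  have w15 : Nat.primeCounting 3697 + 1 ≤ Nat.primeCounting 3701 :=
    pstep 3701 (by norm_num) (by omega) (by omega)
  have w16 : Nat.primeCounting 3701 + 1 ≤ Nat.primeCounting 3709 :=
    pstep 3709 (by norm_num) (by omega) (by omega)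
  have w17 : Nat.primeCounting 3709 + 1 ≤ Nat.primeCounting (61*y) :=
    pstep 3719 (by norm_num) (by omega) (by omega)
  omega

private lemma ratio3 {m : ℕ} (hm : 16384 ≤ m) :
    7*3*(Nat.size m) + 21 ≤ 3*(3-2)*(Nat.sqrt m) := by
  have := h3d m hm
  omega

private lemma ratio5 {x m : ℕ} (hx : 5 ≤ x) (hm : 4096 ≤ m) :
    7*x*(Nat.size m) + 21 ≤ 3*(x-2)*(Nat.sqrt m) := by
  have h5 := h5d m hm
  set L := Nat.size m
  set s := Nat.sqrt m
  set u := x - 2 with hu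
  have hu3 : 3 ≤ u := by omega
  have hx2 : x = u + 2 := by omega
  have t1 : u * (35*L+21) ≤ u * (9*s) := Nat.mul_le_mul_left _ h5
  have t2 : 3*(7*x*L + 21) ≤ u * (35*L+21) := by
    have e : u * (35*L+21) = 35*u*L + 21*u := by ring
    have e2 : 3*(7*x*L+21) = 21*u*L + 42*L + 63 := by rw [hx2]; ring
    have : 21*u*L + 42*L ≤ 35*u*L := by nlinarith
    omega
  have t3 : u * (9*s) = 3*(3*u*s) := by ring
  have : 3*(7*x*L + 21) ≤ 3*(3*u*s) := by omega
  omega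

private lemma key {x y : ℕ} (hx : x.Prime) (h3 : 3 ≤ x) (hxy : x ≤ y) (hoy : Odd y) :
    x.primeCounting + y.primeCounting ≤ (x*y).primeCounting := by
  have hox : Odd x := hx.odd_of_ne_two (by omega)
  have hoxy : Odd (x*y) := hox.mul hoy
  rcases eq_or_lt_of_le h3 with h3e | h4
  · -- x = 3
    subst h3e
    rcases le_or_gt (3*y) 16384 with hsmall | hbig
    · exact fin_3 y hxy (by omega)
    · have hm : 16384 ≤ 3*y - 1 := by omega
      exact analytic (by norm_num) hxy hoxy (ratio3 hm)
        (by rw [Nat.le_sqrt]; omega)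
  · -- x ≥ 4, prime so x ≥ 5
    have hx5 : 5 ≤ x := by
      rcases Nat.lt_or_ge x 5 with h | h
      · interval_cases x
        · exact absurd hx (by norm_num)
      · exact h
    rcases le_or_gt (x*y) 4096 with hsmall | hbig
    · have hx64 : x ≤ 64 := by nlinarith
      interval_cases x
      · exact fin_5 y hxy (by omega)
      · exact absurd hx (by norm_num)
      · exact fin_7 y hxy (by omega)
      · exact absurd hx (by norm_num)
      · exact absurd hx (by norm_num)
      · exact absurd hx (by norm_num)
      · exact fin_11 y hxy (by omega)
      · exact absurd hx (by norm_num)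
      · exact fin_13 y hxy (by omega)
      · exact absurd hx (by norm_num)
      · exact absurd hx (by norm_num)
      · exact absurd hx (by norm_num)
      · exact fin_17 y hxy (by omega)
      · exact absurd hx (by norm_num)
      · exact fin_19 y hxy (by omega)
      · exact absurd hx (by norm_num)
      · exact absurd hx (by norm_num)
      · exact absurd hx (by norm_num)
      · exact fin_23 y hxy (by omega)
      · exact absurd hx (by norm_num)
      · exact absurd hx (by norm_num)
      · exact absurd hx (by norm_num)
      · exact absurd hx (by norm_num)
      · exact absurd hx (by norm_num)
      · exact fin_29 y hxy (by omega)
      · exact absurd hx (by norm_num)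
      · exact fin_31 y hxy (by omega)
      · exact absurd hx (by norm_num)
      · exact absurd hx (by norm_num)
      · exact absurd hx (by norm_num)
      · exact absurd hx (by norm_num)
      · exact absurd hx (by norm_num)
      · exact fin_37 y hxy (by omega)
      · exact absurd hx (by norm_num)
      · exact absurd hx (by norm_num)
      · exact absurd hx (by norm_num)
      · exact fin_41 y hxy (by omega)
      · exact absurd hx (by norm_num)
      · exact fin_43 y hxy (by omega)
      · exact absurd hx (by norm_num)
      · exact absurd hx (by norm_num)
      · exact absurd hx (by norm_num)
      · exact fin_47 y hxy (by omega)
      · exact absurd hx (by norm_num)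
      · exact absurd hx (by norm_num)
      · exact absurd hx (by norm_num)
      · exact absurd hx (by norm_num)
      · exact absurd hx (by norm_num)
      · exact fin_53 y hxy (by omega)
      · exact absurd hx (by norm_num)
      · exact absurd hx (by norm_num)
      · exact absurd hx (by norm_num)
      · exact absurd hx (by norm_num)
      · exact absurd hx (by norm_num)
      · exact fin_59 y hxy (by omega)
      · exact absurd hx (by norm_num)
      · exact fin_61 y hxy (by omega)
      · exact absurd hx (by norm_num)
      · exact absurd hx (by norm_num)
      · exact absurd hx (by norm_num)
    · have hm : 4096 ≤ x*y - 1 := by omega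
      exact analytic (by omega) hxy hoxy (ratio5 hx5 hm)
        (by rw [Nat.le_sqrt]; omega)

private lemma main_ineq (H : ℕ → ℕ)
    (hadd : ∀ a b : ℕ, 1 ≤ a → 1 ≤ b → H (a * b) = H a + H b)
    (hprime : ∀ i : ℕ, H (Nat.nth Nat.Prime i) = i + 1) :
    ∀ m, 1 ≤ m → H m ≤ m.primeCounting := by
  have h1 : H 1 = 0 := by
    have := hadd 1 1 le_rfl le_rfl
    simp at this
    omega
  intro m
  induction m using Nat.strong_induction_on with
  | _ m ih =>
    intro hm1
    rcases eq_or_lt_of_le hm1 with he | h2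
    · rw [← he, h1]; omega
    · have hm2 : 2 ≤ m := h2
      set p := m.minFac with hpdef
      have hp : p.Prime := Nat.minFac_prime (by omega)
      have hdvd : p ∣ m := Nat.minFac_dvd m
      set k := m / p with hkdef
      have hpk : p * k = m := Nat.mul_div_cancel' hdvd
      have hk1 : 1 ≤ k := by
        rcases Nat.eq_zero_or_pos k with h0 | h0
        · rw [h0] at hpk; omega
        · exact h0
      have hHp : H p = Nat.count Nat.Prime p + 1 := by
        have hn := Nat.nth_count hp
        have h2 := hprime (Nat.count Nat.Prime p)
        rw [hn] at h2
        exact h2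
      have hπp : p.primeCounting = Nat.count Nat.Prime p + 1 := by
        have e : p.primeCounting = Nat.count Nat.Prime (p+1) := rfl
        rw [e, Nat.count_succ, if_pos hp]
      rcases eq_or_lt_of_le hk1 with hke | hk2
      · -- k = 1, m = p
        have hmp : m = p := by rw [← hpk, ← hke, mul_one]
        rw [hmp, hHp, hπp]
      · -- k ≥ 2
        have hkm : k < m := Nat.div_lt_self (by omega) hp.one_lt
        have hHk := ih k hkm (by omega)
        have hHm : H m = H p + H k := by
          rw [← hpk]
          exact hadd p k (by have := hp.two_le; omega) (by omega)
        have hkey : p.primeCounting + k.primeCounting ≤ (p*k).primeCounting := by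
          rcases eq_or_ne p 2 with hp2 | hp2
          · rw [hp2]
            obtain ⟨q, hq, hq1, hq2⟩ := Nat.exists_prime_lt_and_le_two_mul k (by omega)
            have hst := pstep q hq hq1 hq2
            have hπ2 : Nat.primeCounting 2 = 1 := by decide
            omega
          · have hp3 : 3 ≤ p := by have := hp.two_le; omega
            have hkd : k ∣ m := ⟨p, by rw [← hpk]; ring⟩
            have hpk' : p ≤ k := by
              have hmf : k.minFac ∣ m := (Nat.minFac_dvd k).trans hkd
              have h2f : 2 ≤ k.minFac := (Nat.minFac_prime (by omega)).two_le
              have hle1 : p ≤ k.minFac := Nat.minFac_le_of_dvd h2f hmf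
              have hle2 : k.minFac ≤ k := Nat.minFac_le (by omega)
              omega
            have hok : Odd k := by
              have hmodd : ¬ 2 ∣ m := by
                intro h2d
                have := Nat.minFac_le_of_dvd le_rfl h2d
                omega
              have hkodd : ¬ 2 ∣ k := fun hd => hmodd (hd.trans hkd)
              rcases Nat.even_or_odd k with he | ho
              · exact absurd he.two_dvd hkodd
              · exact ho
            exact key hp hp3 hpk' hok
        calc H m = H p + H k := hHm
          _ ≤ p.primeCounting + k.primeCounting := by omega
          _ ≤ (p*k).primeCounting := hkey
          _ = m.primeCounting := by rw [hpk]

theorem height_fiber_min_is_nth_prime (H : ℕ → ℕ)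
    (hadd : ∀ a b : ℕ, 1 ≤ a → 1 ≤ b → H (a * b) = H a + H b)
    (hprime : ∀ i : ℕ, H (Nat.nth Nat.Prime i) = i + 1) :
    ∀ n : ℕ, 1 ≤ n →
      IsLeast {m : ℕ | 1 ≤ m ∧ H m = n} (Nat.nth Nat.Prime (n - 1)) := by
  intro n hn
  constructor
  · constructor
    · exact (Nat.prime_nth_prime (n-1)).pos
    · rw [hprime (n-1)]; omega
  · rintro m ⟨hm1, hmH⟩
    have hint := main_ineq H hadd hprime m hm1
    rw [hmH] at hint
    have hcount : n - 1 < Nat.count Nat.Prime (m+1) := by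
      have e : m.primeCounting = Nat.count Nat.Prime (m+1) := rfl
      omega
    have := Nat.nth_lt_of_lt_count hcount
    omega
end

section
/- Let H be completely additive with H(p) = p for every prime p. For n ≥ 2, the maximum of {m : H(m) = n} equals 3^(n/3) if n ≡ 0 mod 3, 4·3^((n-4)/3) if n ≡ 1 mod 3 (and n ≥ 4), and 2·3^((n-2)/3) if n ≡ 2 mod 3. -/
def Gx (n : ℕ) : ℕ :=
  if n % 3 = 0 then 3 ^ (n / 3)
  else if n % 3 = 1 then 4 * 3 ^ ((n - 4) / 3)
  else 2 * 3 ^ ((n - 2) / 3)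

lemma G0 (a : ℕ) : Gx (3 * a) = 3 ^ a := by
  have h1 : (3 * a) % 3 = 0 := by omega
  have h2 : (3 * a) / 3 = a := by omega
  simp [Gx, h1, h2]

lemma G1 (a : ℕ) : Gx (3 * a + 4) = 4 * 3 ^ a := by
  have h1 : (3 * a + 4) % 3 = 1 := by omega
  have h2 : (3 * a + 4 - 4) / 3 = a := by omega
  simp [Gx, h1, h2]

lemma G2 (a : ℕ) : Gx (3 * a + 2) = 2 * 3 ^ a := by
  have h1 : (3 * a + 2) % 3 = 2 := by omega
  have h2 : (3 * a + 2 - 2) / 3 = a := by omega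
  simp [Gx, h1, h2]

lemma pow3 (a : ℕ) : 2 * a + 1 ≤ 3 ^ a := by
  induction a with
  | zero => simp
  | succ n ih => rw [pow_succ]; omega

lemma pow3b (a : ℕ) (ha : 1 ≤ a) : 3 * a ≤ 3 ^ a := by
  induction a with
  | zero => omega
  | succ n ih =>
    rcases Nat.eq_or_lt_of_le ha with h | h
    · simp [← h]
    · have := ih (by omega)
      rw [pow_succ]; omega

lemma Gle (n : ℕ) (hn : 2 ≤ n) : n ≤ Gx n := by
  have hcase : n % 3 = 0 ∨ n % 3 = 1 ∨ n % 3 = 2 := by omega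
  rcases hcase with h | h | h
  · obtain ⟨a, rfl⟩ : ∃ a, n = 3 * a := ⟨n / 3, by omega⟩
    rw [G0]; exact pow3b a (by omega)
  · obtain ⟨a, rfl⟩ : ∃ a, n = 3 * a + 4 := ⟨(n - 4) / 3, by omega⟩
    rw [G1]; nlinarith [pow3 a]
  · obtain ⟨a, rfl⟩ : ∃ a, n = 3 * a + 2 := ⟨(n - 2) / 3, by omega⟩
    rw [G2]; nlinarith [pow3 a]

lemma key_s10 (p k : ℕ) (hp : 2 ≤ p) (hk : 2 ≤ k) : p * Gx k ≤ Gx (p + k) := by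
  have hpc : p % 3 = 0 ∨ p % 3 = 1 ∨ p % 3 = 2 := by omega
  have hkc : k % 3 = 0 ∨ k % 3 = 1 ∨ k % 3 = 2 := by omega
  have h3b : ∀ b : ℕ, (1:ℕ) ≤ 3 ^ b := fun b => Nat.one_le_pow _ _ (by norm_num)
  rcases hpc with hp3 | hp3 | hp3
  · obtain ⟨c, rfl⟩ : ∃ c, p = 3 * c := ⟨p / 3, by omega⟩
    have hc : 1 ≤ c := by omega
    rcases hkc with hk3 | hk3 | hk3
    · obtain ⟨b, rfl⟩ : ∃ b, k = 3 * b := ⟨k / 3, by omega⟩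
      rw [G0, show 3 * c + 3 * b = 3 * (c + b) by ring, G0, pow_add]
      exact Nat.mul_le_mul_right _ (pow3b c hc)
    · obtain ⟨b, rfl⟩ : ∃ b, k = 3 * b + 4 := ⟨(k - 4) / 3, by omega⟩
      rw [G1, show 3 * c + (3 * b + 4) = 3 * (c + b) + 4 by ring, G1, pow_add]
      calc 3 * c * (4 * 3 ^ b) = 4 * (3 * c * 3 ^ b) := by ring
        _ ≤ 4 * (3 ^ c * 3 ^ b) := by
            exact Nat.mul_le_mul_left _ (Nat.mul_le_mul_right _ (pow3b c hc))
        _ = 4 * (3 ^ c * 3 ^ b) := rfl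
      -- goal shape check
    · obtain ⟨b, rfl⟩ : ∃ b, k = 3 * b + 2 := ⟨(k - 2) / 3, by omega⟩
      rw [G2, show 3 * c + (3 * b + 2) = 3 * (c + b) + 2 by ring, G2, pow_add]
      calc 3 * c * (2 * 3 ^ b) = 2 * (3 * c * 3 ^ b) := by ring
        _ ≤ 2 * (3 ^ c * 3 ^ b) :=
            Nat.mul_le_mul_left _ (Nat.mul_le_mul_right _ (pow3b c hc))
  · obtain ⟨c, rfl⟩ : ∃ c, p = 3 * c + 4 := ⟨(p - 4) / 3, by omega⟩
    rcases hkc with hk3 | hk3 | hk3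
    · obtain ⟨b, rfl⟩ : ∃ b, k = 3 * b := ⟨k / 3, by omega⟩
      rw [G0, show 3 * c + 4 + 3 * b = 3 * (c + b) + 4 by ring, G1, pow_add]
      calc (3 * c + 4) * 3 ^ b ≤ (4 * 3 ^ c) * 3 ^ b :=
            Nat.mul_le_mul_right _ (by nlinarith [pow3 c])
        _ = 4 * (3 ^ c * 3 ^ b) := by ring
    · obtain ⟨b, rfl⟩ : ∃ b, k = 3 * b + 4 := ⟨(k - 4) / 3, by omega⟩
      rw [G1, show 3 * c + 4 + (3 * b + 4) = 3 * (c + b + 2) + 2 by ring, G2,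
        show c + b + 2 = (c + b) + 2 from rfl, pow_add, pow_add]
      calc (3 * c + 4) * (4 * 3 ^ b) = ((3 * c + 4) * 4) * 3 ^ b := by ring
        _ ≤ (18 * 3 ^ c) * 3 ^ b := Nat.mul_le_mul_right _ (by nlinarith [pow3 c])
        _ = 2 * (3 ^ c * 3 ^ b * 3 ^ 2) := by ring
    · obtain ⟨b, rfl⟩ : ∃ b, k = 3 * b + 2 := ⟨(k - 2) / 3, by omega⟩
      rw [G2, show 3 * c + 4 + (3 * b + 2) = 3 * (c + b + 2) by ring, G0,
        show c + b + 2 = (c + b) + 2 from rfl, pow_add, pow_add]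
      calc (3 * c + 4) * (2 * 3 ^ b) = ((3 * c + 4) * 2) * 3 ^ b := by ring
        _ ≤ (9 * 3 ^ c) * 3 ^ b := Nat.mul_le_mul_right _ (by nlinarith [pow3 c])
        _ = 3 ^ c * 3 ^ b * 3 ^ 2 := by ring
  · obtain ⟨c, rfl⟩ : ∃ c, p = 3 * c + 2 := ⟨(p - 2) / 3, by omega⟩
    rcases hkc with hk3 | hk3 | hk3
    · obtain ⟨b, rfl⟩ : ∃ b, k = 3 * b := ⟨k / 3, by omega⟩
      rw [G0, show 3 * c + 2 + 3 * b = 3 * (c + b) + 2 by ring, G2, pow_add]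
      calc (3 * c + 2) * 3 ^ b ≤ (2 * 3 ^ c) * 3 ^ b :=
            Nat.mul_le_mul_right _ (by nlinarith [pow3 c])
        _ = 2 * (3 ^ c * 3 ^ b) := by ring
    · obtain ⟨b, rfl⟩ : ∃ b, k = 3 * b + 4 := ⟨(k - 4) / 3, by omega⟩
      rw [G1, show 3 * c + 2 + (3 * b + 4) = 3 * (c + b + 2) by ring, G0,
        show c + b + 2 = (c + b) + 2 from rfl, pow_add, pow_add]
      calc (3 * c + 2) * (4 * 3 ^ b) = ((3 * c + 2) * 4) * 3 ^ b := by ring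
        _ ≤ (9 * 3 ^ c) * 3 ^ b := Nat.mul_le_mul_right _ (by nlinarith [pow3 c])
        _ = 3 ^ c * 3 ^ b * 3 ^ 2 := by ring
    · obtain ⟨b, rfl⟩ : ∃ b, k = 3 * b + 2 := ⟨(k - 2) / 3, by omega⟩
      rw [G2, show 3 * c + 2 + (3 * b + 2) = 3 * (c + b) + 4 by ring, G1, pow_add]
      calc (3 * c + 2) * (2 * 3 ^ b) = ((3 * c + 2) * 2) * 3 ^ b := by ring
        _ ≤ (4 * 3 ^ c) * 3 ^ b := Nat.mul_le_mul_right _ (by nlinarith [pow3 c])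
        _ = 4 * (3 ^ c * 3 ^ b) := by ring

section Main
variable (H : ℕ → ℕ)
    (hadd : ∀ a b : ℕ, 1 ≤ a → 1 ≤ b → H (a * b) = H a + H b)
    (hprime : ∀ p : ℕ, p.Prime → H p = p)

include hadd in
lemma H1 : H 1 = 0 := by have := hadd 1 1 le_rfl le_rfl; simpa using this

include hadd hprime in
lemma Hsplit (m : ℕ) (hm : 2 ≤ m) :
    H m = m.minFac + H (m / m.minFac) := by
  have hp := Nat.minFac_prime (show m ≠ 1 by omega)
  have hd := Nat.minFac_dvd m
  have hq1 : 1 ≤ m / m.minFac := Nat.div_pos (Nat.minFac_le (by omega)) hp.pos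
  have h := hadd m.minFac (m / m.minFac) hp.one_lt.le hq1
  rw [Nat.mul_div_cancel' hd] at h
  rw [h, hprime _ hp]

include hadd hprime in
lemma Hge2 (m : ℕ) (hm : 2 ≤ m) : 2 ≤ H m := by
  have := Hsplit H hadd hprime m hm
  have := (Nat.minFac_prime (show m ≠ 1 by omega)).two_le
  omega

include hadd hprime in
lemma Hbound : ∀ m, 2 ≤ m → m ≤ Gx (H m) := by
  intro m
  induction m using Nat.strong_induction_on with
  | _ m ih =>
    intro hm
    have hp := Nat.minFac_prime (show m ≠ 1 by omega)
    have hd := Nat.minFac_dvd m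
    have hmm : m.minFac * (m / m.minFac) = m := Nat.mul_div_cancel' hd
    have hH := Hsplit H hadd hprime m hm
    by_cases hq : m / m.minFac = 1
    · have hmp : m = m.minFac := by rw [hq, mul_one] at hmm; omega
      have hHm : H m = m := by rw [hH, hq, H1 H hadd]; omega
      rw [hHm]
      exact Gle m (by omega)
    · have hq1 : 1 ≤ m / m.minFac := Nat.div_pos (Nat.minFac_le (by omega)) hp.pos
      have hq2 : 2 ≤ m / m.minFac := by omega
      have hlt : m / m.minFac < m := Nat.div_lt_self (by omega) hp.one_lt
      calc m = m.minFac * (m / m.minFac) := hmm.symm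
        _ ≤ m.minFac * Gx (H (m / m.minFac)) :=
            Nat.mul_le_mul_left _ (ih _ hlt hq2)
        _ ≤ Gx (m.minFac + H (m / m.minFac)) :=
            key_s10 _ _ hp.two_le (Hge2 H hadd hprime _ hq2)
        _ = Gx (H m) := by rw [hH]

include hadd hprime in
lemma Hpow3 : ∀ a, H (3 ^ a) = 3 * a := by
  intro a
  induction a with
  | zero => simpa using H1 H hadd
  | succ n ih =>
    have h : H (3 ^ (n + 1)) = H (3 ^ n) + H 3 := by
      rw [pow_succ]
      exact hadd (3 ^ n) 3 (Nat.one_le_pow _ _ (by norm_num)) (by norm_num)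
    rw [h, ih, hprime 3 Nat.prime_three]; ring
end Main

theorem sopfr_fiber_max (H : ℕ → ℕ)
    (hadd : ∀ a b : ℕ, 1 ≤ a → 1 ≤ b → H (a * b) = H a + H b)
    (hprime : ∀ p : ℕ, p.Prime → H p = p) :
    ∀ n : ℕ, 2 ≤ n →
      (n % 3 = 0 → IsGreatest {m : ℕ | 1 ≤ m ∧ H m = n} (3 ^ (n / 3))) ∧
      (n % 3 = 1 → 4 ≤ n →
        IsGreatest {m : ℕ | 1 ≤ m ∧ H m = n} (4 * 3 ^ ((n - 4) / 3))) ∧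
      (n % 3 = 2 →
        IsGreatest {m : ℕ | 1 ≤ m ∧ H m = n} (2 * 3 ^ ((n - 2) / 3))) := by
  have h2 : H 2 = 2 := hprime 2 Nat.prime_two
  have h4 : H 4 = 4 := by
    have := hadd 2 2 (by norm_num) (by norm_num)
    norm_num [h2] at this; omega
  have hub : ∀ n : ℕ, 2 ≤ n → ∀ m ∈ {m : ℕ | 1 ≤ m ∧ H m = n}, m ≤ Gx n := by
    rintro n hn m ⟨hm1, hm2⟩
    rcases Nat.eq_or_lt_of_le hm1 with h | h
    · exfalso; rw [← h, H1 H hadd] at hm2; omega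
    · rw [← hm2]; exact Hbound H hadd hprime m h
  intro n hn
  refine ⟨fun h0 => ?_, fun h1n h4n => ?_, fun h2n => ?_⟩
  · obtain ⟨a, rfl⟩ : ∃ a, n = 3 * a := ⟨n / 3, by omega⟩
    have hdiv : 3 * a / 3 = a := by omega
    rw [hdiv]
    constructor
    · exact ⟨Nat.one_le_pow _ _ (by norm_num), Hpow3 H hadd hprime a⟩
    · intro m hm
      have := hub _ hn m hm
      rwa [G0] at this
  · obtain ⟨a, rfl⟩ : ∃ a, n = 3 * a + 4 := ⟨(n - 4) / 3, by omega⟩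
    have hdiv : (3 * a + 4 - 4) / 3 = a := by omega
    rw [hdiv]
    constructor
    · refine ⟨by have := Nat.one_le_pow a 3 (by norm_num); omega, ?_⟩
      rw [hadd 4 (3 ^ a) (by norm_num) (Nat.one_le_pow _ _ (by norm_num)), h4,
        Hpow3 H hadd hprime a]
      omega
    · intro m hm
      have := hub _ hn m hm
      rwa [G1] at this
  · obtain ⟨a, rfl⟩ : ∃ a, n = 3 * a + 2 := ⟨(n - 2) / 3, by omega⟩
    have hdiv : (3 * a + 2 - 2) / 3 = a := by omega
    rw [hdiv]
    constructor
    · refine ⟨by have := Nat.one_le_pow a 3 (by norm_num); omega, ?_⟩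
      rw [hadd 2 (3 ^ a) (by norm_num) (Nat.one_le_pow _ _ (by norm_num)), h2,
        Hpow3 H hadd hprime a]
      omega
    · intro m hm
      have := hub _ hn m hm
      rwa [G2] at this
end

section
/- Let H be completely additive with H(2) = 1 and H(p) = H(p - 1) for every odd prime p (the modified Shapiro height function). Then for every n ≥ 0, every m ≥ 1 with H(m) = n satisfies 2^n ≤ m ≤ 3^n. -/
theorem shapiro_height_bounds (H : ℕ → ℕ)
    (hadd : ∀ a b : ℕ, 1 ≤ a → 1 ≤ b → H (a * b) = H a + H b)
    (h2 : H 2 = 1)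
    (hodd : ∀ p : ℕ, p.Prime → p ≠ 2 → H p = H (p - 1)) :
    ∀ n : ℕ, ∀ m : ℕ, 1 ≤ m → H m = n → 2 ^ n ≤ m ∧ m ≤ 3 ^ n := by
  have h1 : H 1 = 0 := by have := hadd 1 1 le_rfl le_rfl; simpa using this
  have key : ∀ m : ℕ, 1 ≤ m → 2 ^ H m ≤ m ∧ m ≤ 3 ^ H m := by
    intro m
    induction m using Nat.strong_induction_on with
    | _ m ih =>
      intro hm
      rcases eq_or_lt_of_le hm with h | h
      · rw [← h]; simp [h1]
      -- m ≥ 2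
      by_cases he : 2 ∣ m
      · obtain ⟨k, rfl⟩ := he
        have hk : 1 ≤ k := by omega
        obtain ⟨hk1, hk2⟩ := ih k (by omega) hk
        have hH : H (2 * k) = H k + 1 := by
          rw [hadd 2 k (by omega) hk, h2]; omega
        rw [hH, pow_succ, pow_succ]
        constructor <;> nlinarith
      · by_cases hp : m.Prime
        · have hm3 : 3 ≤ m := by
            rcases Nat.lt_or_ge m 3 with h3 | h3
            · interval_cases m <;> simp_all
            · exact h3
          have hne2 : m ≠ 2 := by omega
          have hH : H m = H (m - 1) := hodd m hp hne2
          obtain ⟨hl, hr⟩ := ih (m - 1) (by omega) (by omega)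
          rw [hH]
          constructor
          · omega
          · -- m - 1 is even, 3 ^ _ is odd, so m - 1 < 3 ^ _
            have hev : 2 ∣ (m - 1) := by
              rcases Nat.even_or_odd m with he' | ho'
              · exact absurd he'.two_dvd he
              · obtain ⟨t, ht⟩ := ho'; omega
            have hodd3 : 3 ^ H (m - 1) % 2 = 1 := by
              rw [Nat.pow_mod]; simp
            omega
        · obtain ⟨a, ha, ha2, ham⟩ := Nat.exists_dvd_of_not_prime2 (by omega) hp
          obtain ⟨b, rfl⟩ := ha
          have hb1 : 1 ≤ b := by
            rcases Nat.eq_zero_or_pos b with rfl | h0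
            · simp at h
            · exact h0
          have hb2 : b < a * b := by nlinarith
          obtain ⟨hal, har⟩ := ih a ham (by omega)
          obtain ⟨hbl, hbr⟩ := ih b hb2 hb1
          rw [hadd a b (by omega) hb1, pow_add, pow_add]
          exact ⟨Nat.mul_le_mul hal hbl, Nat.mul_le_mul har hbr⟩
  intro n m hm hHm
  have := key m hm
  rw [hHm] at this
  exact this
end

section
/- Let H be completely additive with H(2) = 1 and H(p) = H(p+1) for every odd prime p (the Dedekind-type height function). Then for every n ≥ 0, every m ≥ 1 with H(m) = n satisfies m ≤ 2^n, and the maximum of {m : H(m) = n} equals 2^n. -/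
theorem dedekind_height_max (H : ℕ → ℕ)
    (hadd : ∀ a b : ℕ, 1 ≤ a → 1 ≤ b → H (a * b) = H a + H b)
    (h2 : H 2 = 1)
    (hodd : ∀ p : ℕ, p.Prime → p ≠ 2 → H p = H (p + 1)) :
    ∀ n : ℕ, (∀ m : ℕ, 1 ≤ m → H m = n → m ≤ 2 ^ n) ∧
      IsGreatest {m : ℕ | 1 ≤ m ∧ H m = n} (2 ^ n) := by
  have h1 : H 1 = 0 := by
    have := hadd 1 1 le_rfl le_rfl
    simp at this
    omega
  have hpow : ∀ n : ℕ, H (2 ^ n) = n := by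
    intro n
    induction n with
    | zero => simpa using h1
    | succ k ih =>
      have := hadd 2 (2 ^ k) (by norm_num) (Nat.one_le_two_pow)
      rw [← pow_succ'] at this
      rw [this, h2, ih]
      omega
  have key : ∀ m : ℕ, 1 ≤ m → m ≤ 2 ^ (H m) := by
    intro m
    induction m using Nat.strong_induction_on with
    | _ m ih =>
      intro hm
      rcases eq_or_lt_of_le hm with h | h
      · simp [← h, h1]
      · by_cases hp : m.Prime
        · by_cases hm2 : m = 2
          · subst hm2; simp [h2]
          · have he : H m = H (m + 1) := hodd m hp hm2
            have hmo : m % 2 = 1 := Nat.odd_iff.mp (hp.odd_of_ne_two hm2)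
            obtain ⟨k, hk⟩ : ∃ k, m + 1 = 2 * k := ⟨(m + 1) / 2, by omega⟩
            have hk1 : 1 ≤ k := by omega
            have hklt : k < m := by omega
            have hHk : H (m + 1) = 1 + H k := by
              rw [hk, hadd 2 k (by norm_num) hk1, h2]
            have hkle := ih k hklt hk1
            have : m + 1 ≤ 2 ^ (H (m + 1)) := by
              rw [hHk, pow_add, pow_one]
              omega
            rw [← he] at this
            omega
        · obtain ⟨a, ha, ha2, halt⟩ := Nat.exists_dvd_of_not_prime2 h hp
          obtain ⟨b, hb⟩ := ha
          have hb1 : 1 ≤ b := by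
            rcases Nat.eq_zero_or_pos b with h0 | h0
            · rw [h0, mul_zero] at hb; omega
            · exact h0
          have hblt : b < m := by
            have h2b : 2 * b ≤ a * b := Nat.mul_le_mul ha2 (le_refl b)
            omega
          have := hadd a b (by omega) hb1
          rw [← hb] at this
          have haa := ih a halt (by omega)
          have hbb := ih b hblt hb1
          calc m = a * b := hb
            _ ≤ 2 ^ H a * 2 ^ H b := Nat.mul_le_mul haa hbb
            _ = 2 ^ (H a + H b) := (pow_add 2 _ _).symm
            _ = 2 ^ H m := by rw [this]
  intro n
  refine ⟨fun m hm hHm => hHm ▸ key m hm, ⟨Nat.one_le_two_pow, hpow n⟩, ?_⟩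
  rintro m ⟨hm1, hmn⟩
  exact hmn ▸ key m hm1
end

section
/- Let H be the Matula height function: completely additive with H(p_i) = H(i) + 1 for every i ≥ 1, where p_i is the i-th prime. For n ≥ 2, the minimum of {m : H(m) = n} equals 3·5^((n-2)/3) if n ≡ 2 mod 3, 5^(n/3) if n ≡ 0 mod 3 (n ≥ 3), and 9·5^((n-4)/3) if n ≡ 1 mod 3 (n ≥ 4). -/
private def g : ℕ → ℕ
  | 0 => 1
  | 1 => 2
  | 2 => 3
  | 3 => 5
  | 4 => 9
  | (n+5) => 5 * g (n+2)

private lemma g_eq5 (n : ℕ) : g (n+5) = 5 * g (n+2) := by simp [g]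

private lemma g_pos (n : ℕ) : 1 ≤ g n := by
  induction n using Nat.strong_induction_on with
  | _ n ih =>
    match n with
    | 0 | 1 | 2 | 3 | 4 => simp [g]
    | n+5 =>
      rw [g_eq5]
      have := ih (n+2) (by omega)
      omega

private lemma g_3k2 (k : ℕ) : g (3*k+2) = 3 * 5^k := by
  induction k with
  | zero => simp [g]
  | succ k ih =>
    have : 3*(k+1)+2 = (3*k)+5 := by ring
    rw [this, g_eq5, show 3*k+2 = 3*k+2 from rfl] at *
    rw [ih]; ring

private lemma g_3k3 (k : ℕ) : g (3*k+3) = 5^(k+1) := by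
  induction k with
  | zero => simp [g]
  | succ k ih =>
    have h : 3*(k+1)+3 = (3*k+1)+5 := by ring
    rw [h, g_eq5, show 3*k+1+2 = 3*k+3 from rfl, ih]; ring

private lemma g_3k4 (k : ℕ) : g (3*k+4) = 9 * 5^k := by
  induction k with
  | zero => simp [g]
  | succ k ih =>
    have h : 3*(k+1)+4 = (3*k+2)+5 := by ring
    rw [h, g_eq5, show 3*k+2+2 = 3*k+4 from rfl, ih]; ring

private lemma g_superadd : ∀ s x y : ℕ, x + y ≤ s → g (x + y) ≤ g x * g y := by
  intro s
  induction s with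
  | zero =>
    intro x y h
    have hx : x = 0 := by omega
    have hy : y = 0 := by omega
    subst hx; subst hy; simp [g]
  | succ s ih =>
    intro x y h
    by_cases hx : x ≤ 4
    · by_cases hy : y ≤ 4
      · interval_cases x <;> interval_cases y <;> norm_num [g, g_eq5]
      · obtain ⟨b, rfl⟩ : ∃ b, y = b + 5 := ⟨y - 5, by omega⟩
        have e1 : x + (b+5) = (x + b) + 5 := by ring
        have e2 : g (x + (b+5)) = 5 * g (x + (b+2)) := by
          rw [e1, g_eq5]; ring_nf
        have e3 : g (b+5) = 5 * g (b+2) := g_eq5 b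
        have hih : g (x + (b+2)) ≤ g x * g (b+2) := ih x (b+2) (by omega)
        calc g (x + (b+5)) = 5 * g (x + (b+2)) := e2
          _ ≤ 5 * (g x * g (b+2)) := by omega
          _ = g x * (5 * g (b+2)) := by ring
          _ = g x * g (b+5) := by rw [e3]
    · obtain ⟨a, rfl⟩ : ∃ a, x = a + 5 := ⟨x - 5, by omega⟩
      have e2 : g ((a+5) + y) = 5 * g ((a+2) + y) := by
        rw [show (a+5)+y = (a+y)+5 by ring, g_eq5, show a+y+2 = (a+2)+y by ring]
      have e3 : g (a+5) = 5 * g (a+2) := g_eq5 a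
      have hih : g ((a+2) + y) ≤ g (a+2) * g y := ih (a+2) y (by omega)
      calc g ((a+5) + y) = 5 * g ((a+2) + y) := e2
        _ ≤ 5 * (g (a+2) * g y) := by omega
        _ = (5 * g (a+2)) * g y := by ring
        _ = g (a+5) * g y := by rw [e3]

private lemma nth_prime_zero' : Nat.nth Nat.Prime 0 = 2 := by
  have := Nat.nth_count (p := Nat.Prime) (n := 2) (by norm_num)
  simpa [show Nat.count Nat.Prime 2 = 0 by decide] using this

private lemma nth_prime_one' : Nat.nth Nat.Prime 1 = 3 := by
  have := Nat.nth_count (p := Nat.Prime) (n := 3) (by norm_num)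
  simpa [show Nat.count Nat.Prime 3 = 1 by decide] using this

private lemma nth_prime_two' : Nat.nth Nat.Prime 2 = 5 := by
  have := Nat.nth_count (p := Nat.Prime) (n := 5) (by norm_num)
  simpa [show Nat.count Nat.Prime 5 = 2 by decide] using this

private lemma nth_prime_four' : Nat.nth Nat.Prime 4 = 11 := by
  have := Nat.nth_count (p := Nat.Prime) (n := 11) (by norm_num)
  simpa [show Nat.count Nat.Prime 11 = 4 by decide] using this

private lemma nth_prime_ge (k : ℕ) : k + 2 ≤ Nat.nth Nat.Prime k := by
  induction k with
  | zero => rw [nth_prime_zero']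
  | succ k ih =>
    have h : Nat.nth Nat.Prime k < Nat.nth Nat.Prime (k+1) :=
      (Nat.nth_lt_nth Nat.infinite_setOf_prime (k := k) (n := k+1)).mpr (by omega)
    omega

private lemma nth_prime_two_mul : ∀ k : ℕ, 4 ≤ k → 2*k + 2 ≤ Nat.nth Nat.Prime k := by
  intro k hk
  induction k with
  | zero => omega
  | succ k ih =>
    rcases Nat.lt_or_ge k 4 with h4 | h4
    · have hk4 : k + 1 = 4 := by omega
      rw [hk4, nth_prime_four']
      norm_num
    · have h1 := ih h4
      have hlt : Nat.nth Nat.Prime k < Nat.nth Nat.Prime (k+1) :=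
        (Nat.nth_lt_nth Nat.infinite_setOf_prime (k := k) (n := k+1)).mpr (by omega)
      have hpk : Nat.Prime (Nat.nth Nat.Prime k) := Nat.prime_nth_prime k
      have hpk1 : Nat.Prime (Nat.nth Nat.Prime (k+1)) := Nat.prime_nth_prime (k+1)
      have hok : Odd (Nat.nth Nat.Prime k) := hpk.odd_of_ne_two (by omega)
      have hok1 : Odd (Nat.nth Nat.Prime (k+1)) := hpk1.odd_of_ne_two (by omega)
      obtain ⟨u, hu⟩ := hok
      obtain ⟨v, hv⟩ := hok1
      omega

private lemma g_ge_five : ∀ n : ℕ, 5 ≤ g (n+3)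
  | 0 => by simp [g]
  | 1 => by simp [g]
  | (n+2) => by rw [g_eq5]; have := g_pos (n+2); omega

private lemma g_triple : ∀ n : ℕ,
    g (n+3) ≤ 2*g (n+2) ∧ g (n+4) ≤ 2*g (n+3) ∧ g (n+5) ≤ 2*g (n+4) := by
  intro n
  induction n with
  | zero => norm_num [g, g_eq5]
  | succ n ih =>
    obtain ⟨h1, h2, h3⟩ := ih
    refine ⟨h2, h3, ?_⟩
    have e1 : g (n+1+5) = 5 * g (n+3) := g_eq5 (n+1)
    have e2 : g (n+5) = 5 * g (n+2) := g_eq5 n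
    have : g (n+1+4) = g (n+5) := by norm_num
    rw [e1, this, e2]
    omega

private lemma g_double (n : ℕ) (hn : 2 ≤ n) : g (n+1) ≤ 2 * g n := by
  obtain ⟨m, rfl⟩ : ∃ m, n = m + 2 := ⟨n - 2, by omega⟩
  exact (g_triple m).1

private lemma g_prime_bound (n : ℕ) : g (n+1) ≤ Nat.nth Nat.Prime (g n - 1) := by
  match n with
  | 0 => simp [g, nth_prime_zero']
  | 1 => simp [g, nth_prime_one']
  | 2 => simp [g, nth_prime_two']
  | (m+3) =>
    have h5 := g_ge_five m
    have hge := nth_prime_two_mul (g (m+3) - 1) (by omega)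
    have hdb := g_double (m+3) (by omega)
    omega

private lemma H_lower (H : ℕ → ℕ)
    (hadd : ∀ a b : ℕ, 1 ≤ a → 1 ≤ b → H (a * b) = H a + H b)
    (hprime : ∀ i : ℕ, 1 ≤ i → H (Nat.nth Nat.Prime (i - 1)) = H i + 1) :
    ∀ m : ℕ, 1 ≤ m → g (H m) ≤ m := by
  have H1 : H 1 = 0 := by have := hadd 1 1 le_rfl le_rfl; simp at this; omega
  intro m
  induction m using Nat.strong_induction_on with
  | _ m ih =>
    intro hm
    rcases eq_or_lt_of_le hm with h1 | h2
    · rw [← h1, H1]; simp [g]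
    · by_cases hp : m.Prime
      · set k := Nat.count Nat.Prime m with hk
        have hnth : Nat.nth Nat.Prime k = m := Nat.nth_count hp
        have hHm : H m = H (k+1) + 1 := by
          have := hprime (k+1) (by omega)
          simpa [hnth] using this
        have hkm : k + 2 ≤ m := hnth ▸ nth_prime_ge k
        have hih : g (H (k+1)) ≤ k + 1 := ih (k+1) (by omega) (by omega)
        have hpb := g_prime_bound (H (k+1))
        have hmono : Nat.nth Nat.Prime (g (H (k+1)) - 1) ≤ Nat.nth Nat.Prime k := by
          apply (Nat.nth_le_nth Nat.infinite_setOf_prime).mpr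
          have := g_pos (H (k+1)); omega
        rw [hHm]
        calc g (H (k+1) + 1) ≤ Nat.nth Nat.Prime (g (H (k+1)) - 1) := hpb
          _ ≤ Nat.nth Nat.Prime k := hmono
          _ = m := hnth
      · obtain ⟨a, hdvd, ha2, ham⟩ := Nat.exists_dvd_of_not_prime2 h2 hp
        obtain ⟨b, hb⟩ := hdvd
        have hb2 : 2 ≤ b := by
          rcases Nat.lt_or_ge b 2 with h | h
          · interval_cases b <;> omega
          · exact h
        have hbm : b < m := by nlinarith
        have heq := hadd a b (by omega) (by omega)
        rw [hb, heq]
        calc g (H a + H b) ≤ g (H a) * g (H b) := g_superadd (H a + H b) _ _ le_rfl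
          _ ≤ a * b := Nat.mul_le_mul (ih a (by omega) (by omega)) (ih b (by omega) (by omega))

theorem matula_height_min (H : ℕ → ℕ)
    (hadd : ∀ a b : ℕ, 1 ≤ a → 1 ≤ b → H (a * b) = H a + H b)
    (hprime : ∀ i : ℕ, 1 ≤ i → H (Nat.nth Nat.Prime (i - 1)) = H i + 1) :
    ∀ n : ℕ, 2 ≤ n →
      (n % 3 = 2 → IsLeast {m : ℕ | 1 ≤ m ∧ H m = n} (3 * 5 ^ ((n - 2) / 3))) ∧
      (n % 3 = 0 → 3 ≤ n → IsLeast {m : ℕ | 1 ≤ m ∧ H m = n} (5 ^ (n / 3))) ∧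
      (n % 3 = 1 → 4 ≤ n →
        IsLeast {m : ℕ | 1 ≤ m ∧ H m = n} (9 * 5 ^ ((n - 4) / 3))) := by
  have H1 : H 1 = 0 := by have := hadd 1 1 le_rfl le_rfl; simp at this; omega
  have H2 : H 2 = 1 := by
    have := hprime 1 le_rfl
    simpa [nth_prime_zero', H1] using this
  have H3 : H 3 = 2 := by
    have := hprime 2 (by omega)
    simpa [nth_prime_one', H2] using this
  have H5 : H 5 = 3 := by
    have := hprime 3 (by omega)
    simpa [nth_prime_two', H3] using this
  have H9 : H 9 = 4 := by
    have := hadd 3 3 (by omega) (by omega)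
    norm_num [H3] at this
    omega
  have Hpow : ∀ k : ℕ, H (5^k) = 3*k := by
    intro k
    induction k with
    | zero => simpa using H1
    | succ k ih =>
      have := hadd 5 (5^k) (by omega) (Nat.one_le_pow _ _ (by omega))
      rw [← pow_succ'] at this
      rw [this, H5, ih]; ring
  have Hm2 : ∀ k : ℕ, H (3 * 5^k) = 3*k + 2 := by
    intro k
    have := hadd 3 (5^k) (by omega) (Nat.one_le_pow _ _ (by omega))
    rw [this, H3, Hpow]; ring
  have Hm1 : ∀ k : ℕ, H (9 * 5^k) = 3*k + 4 := by
    intro k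
    have := hadd 9 (5^k) (by omega) (Nat.one_le_pow _ _ (by omega))
    rw [this, H9, Hpow]; ring
  have lower := H_lower H hadd hprime
  intro n hn
  refine ⟨?_, ?_, ?_⟩
  · intro h2
    obtain ⟨k, rfl⟩ : ∃ k, n = 3*k + 2 := ⟨(n-2)/3, by omega⟩
    have hk : (3*k + 2 - 2)/3 = k := by omega
    rw [hk]
    constructor
    · exact ⟨Nat.one_le_iff_ne_zero.mpr (by positivity), Hm2 k⟩
    · rintro m ⟨hm1, hm2⟩
      have := lower m hm1
      rw [hm2, g_3k2] at this
      exact this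
  · intro h0 h3
    obtain ⟨k, rfl⟩ : ∃ k, n = 3*k + 3 := ⟨(n-3)/3, by omega⟩
    have hk : (3*k + 3)/3 = k + 1 := by omega
    rw [hk]
    constructor
    · exact ⟨Nat.one_le_iff_ne_zero.mpr (by positivity), by rw [Hpow]; ring⟩
    · rintro m ⟨hm1, hm2⟩
      have := lower m hm1
      rw [hm2, g_3k3] at this
      exact this
  · intro h1 h4
    obtain ⟨k, rfl⟩ : ∃ k, n = 3*k + 4 := ⟨(n-4)/3, by omega⟩
    have hk : (3*k + 4 - 4)/3 = k := by omega
    rw [hk]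
    constructor
    · exact ⟨Nat.one_le_iff_ne_zero.mpr (by positivity), Hm1 k⟩
    · rintro m ⟨hm1, hm2⟩
      have := lower m hm1
      rw [hm2, g_3k4] at this
      exact this
end

section
/- Let H be a completely additive function with H(p_i) = H(f(i)) + 1 for all i, where f : ℕ → ℕ satisfies f(1) = 1, every prime factor p_r of f(i) has r < i, and f⁻¹(t) is finite for every t. Then for every n, the set of primes p with H(p) = n is finite, and hence {m : H(m) = n} is finite for every n. -/
theorem recursive_height_finite_fibers (H : ℕ → ℕ) (f : ℕ → ℕ)
    (hadd : ∀ a b : ℕ, 1 ≤ a → 1 ≤ b → H (a * b) = H a + H b)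
    (hrec : ∀ i : ℕ, 1 ≤ i → H (Nat.nth Nat.Prime (i - 1)) = H (f i) + 1)
    (hf1 : f 1 = 1)
    (hfdvd : ∀ i r : ℕ, 1 ≤ r → Nat.nth Nat.Prime (r - 1) ∣ f i → r < i)
    (hffin : ∀ t : ℕ, {s : ℕ | f s = t}.Finite) :
    (∀ n : ℕ, {p : ℕ | p.Prime ∧ H p = n}.Finite) ∧
    (∀ n : ℕ, {m : ℕ | 1 ≤ m ∧ H m = n}.Finite) := by
  have H1 : H 1 = 0 := by
    have := hadd 1 1 le_rfl le_rfl
    simpa using this.symm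
  have fpos : ∀ i : ℕ, 1 ≤ i → 1 ≤ f i := by
    intro i hi
    by_contra h
    have hfi : f i = 0 := by omega
    have := hfdvd i i hi (by rw [hfi]; exact dvd_zero _)
    omega
  have Hppos : ∀ p : ℕ, p.Prime → 1 ≤ H p := by
    intro p hp
    have hk : Nat.nth Nat.Prime (Nat.count Nat.Prime p) = p := Nat.nth_count hp
    have := hrec (Nat.count Nat.Prime p + 1) (by omega)
    simp only [Nat.add_sub_cancel] at this
    rw [hk] at this
    omega
  have Hdec : ∀ m : ℕ, 2 ≤ m →
      H m = H m.minFac + H (m / m.minFac) := by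
    intro m hm
    have hpp : m.minFac.Prime := Nat.minFac_prime (by omega)
    have hdvd : m.minFac ∣ m := Nat.minFac_dvd m
    have hq1 : 1 ≤ m / m.minFac :=
      (Nat.one_le_div_iff hpp.pos).mpr (Nat.le_of_dvd (by omega) hdvd)
    conv_lhs => rw [← Nat.mul_div_cancel' hdvd]
    exact hadd _ _ hpp.one_le hq1
  have Hpos : ∀ m : ℕ, 2 ≤ m → 1 ≤ H m := by
    intro m hm
    have h := Hdec m hm
    have := Hppos m.minFac (Nat.minFac_prime (by omega))
    omega
  have bound : ∀ N B : ℕ, (∀ p, p.Prime → H p ≤ N → p ≤ B) →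
      ∀ m, 1 ≤ m → H m ≤ N → m ≤ B ^ H m := by
    intro N B hB m
    induction m using Nat.strong_induction_on with
    | _ m ih =>
      intro hm hHm
      rcases eq_or_lt_of_le hm with h1 | h2
      · rw [← h1, H1]; simp
      · have h2 : 2 ≤ m := h2
        have hpp : m.minFac.Prime := Nat.minFac_prime (by omega)
        have hdvd : m.minFac ∣ m := Nat.minFac_dvd m
        have hq1 : 1 ≤ m / m.minFac :=
          (Nat.one_le_div_iff hpp.pos).mpr (Nat.le_of_dvd (by omega) hdvd)
        have hH := Hdec m h2
        have hp1 := Hppos m.minFac hpp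
        have hpB : m.minFac ≤ B := hB _ hpp (by omega)
        have hB1 : 1 ≤ B := le_trans hpp.one_le hpB
        have hlt : m / m.minFac < m := Nat.div_lt_self (by omega) hpp.one_lt
        have hIH := ih _ hlt hq1 (by omega)
        calc m = m.minFac * (m / m.minFac) := (Nat.mul_div_cancel' hdvd).symm
          _ ≤ B * B ^ (H (m / m.minFac)) := Nat.mul_le_mul hpB hIH
          _ = B ^ (1 + H (m / m.minFac)) := by rw [pow_add, pow_one]
          _ ≤ B ^ (H m) := Nat.pow_le_pow_right hB1 (by omega)
  have main : ∀ n : ℕ, {m : ℕ | 1 ≤ m ∧ H m ≤ n}.Finite := by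
    intro n
    induction n with
    | zero =>
      apply Set.Finite.subset (Set.finite_singleton 1)
      rintro m ⟨hm, hHm⟩
      by_contra h
      have h2 : 2 ≤ m := by
        have hne : m ≠ 1 := by simpa using h
        omega
      have := Hpos m h2
      omega
    | succ n ihn =>
      have hfib : {s : ℕ | 1 ≤ f s ∧ H (f s) ≤ n}.Finite := by
        have hsub : {s : ℕ | 1 ≤ f s ∧ H (f s) ≤ n} ⊆
            ⋃ t ∈ {m : ℕ | 1 ≤ m ∧ H m ≤ n}, {s : ℕ | f s = t} := by
          rintro s ⟨h1, h2⟩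
          exact Set.mem_biUnion ⟨h1, h2⟩ rfl
        exact (ihn.biUnion (fun t _ => hffin t)).subset hsub
      have hprimes : {p : ℕ | p.Prime ∧ H p ≤ n + 1}.Finite := by
        have hsub : {p : ℕ | p.Prime ∧ H p ≤ n + 1} ⊆
            (fun s => Nat.nth Nat.Prime (s - 1)) '' {s : ℕ | 1 ≤ f s ∧ H (f s) ≤ n} := by
          rintro p ⟨hp, hHp⟩
          refine ⟨Nat.count Nat.Prime p + 1, ⟨fpos _ (by omega), ?_⟩, ?_⟩
          · have h := hrec (Nat.count Nat.Prime p + 1) (by omega)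
            simp only [Nat.add_sub_cancel] at h
            rw [Nat.nth_count hp] at h
            omega
          · simp [Nat.nth_count hp]
        exact (hfib.image _).subset hsub
      obtain ⟨B, hB⟩ : ∃ B : ℕ, ∀ p, p.Prime → H p ≤ n + 1 → p ≤ B := by
        obtain ⟨B, hB⟩ := hprimes.bddAbove
        exact ⟨B, fun p hp h => hB ⟨hp, h⟩⟩
      apply Set.Finite.subset (Set.finite_Iic ((B + 1) ^ (n + 1)))
      rintro m ⟨hm, hHm⟩
      have hB' : ∀ p, p.Prime → H p ≤ n + 1 → p ≤ B + 1 :=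
        fun p hp h => le_trans (hB p hp h) (Nat.le_succ B)
      have h1 := bound (n + 1) (B + 1) hB' m hm hHm
      have h2 : (B + 1) ^ (H m) ≤ (B + 1) ^ (n + 1) :=
        Nat.pow_le_pow_right (by omega) hHm
      exact le_trans h1 h2
  constructor
  · intro n
    exact (main n).subset (fun p ⟨hp, he⟩ => ⟨hp.one_le, he.le⟩)
  · intro n
    exact (main n).subset (fun m ⟨h1, he⟩ => ⟨h1, he.le⟩)
end
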